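/- arXiv:1001.1589 — 5 statements merged into one kernel-verified Lean document; each statement's English description precedes it below -/
import Mathlib

section
/- Let E be a countable set and K a bounded self-adjoint operator on l²(E) with 0 ≤ K ≤ I (i.e. 0 ≤ ⟨f, K f⟩ ≤ ⟨f, f⟩ for all f ∈ l²(E)). Then there exists a unique probability measure μ on X = {0,1}^E (with the product σ-algebra) such that for every nonempty finite subset S = {x₁,…,xₙ} ⊆ E, μ({ξ ∈ X : S ⊆ ξ}) = det (K(xᵢ,xⱼ))_{1≤i,j≤n}, where K(x,y) := ⟨e_x, K e_y⟩. -/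
/-
Enumerate `E` inside `ℕ` and let `K_n` be the compression of `K` to the first `n` indices. The
probability that a configuration agrees with `s : Fin n → Bool` on these indices has to be
`det C_s`, where `C_s` has the rows of `K_n` at the indices in `s` and those of `1 - K_n` at the
others. By multilinearity of the determinant in the rows, summing `det C_s` over the `s` that
contain a set `S` gives the principal minor `det K_S`, and summing over the last bit gives the
weight of the shorter prefix. The weights are nonnegative: when `1 - K_n` is invertible,
`C_s = T (1 - K_n)` where `T` is the identity off `s` and agrees with the positive semidefinite
`K_n (1 - K_n)⁻¹` on the rows in `s`; the general case follows by letting `t K_n → K_n`.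
Consistent nonnegative weights on binary prefixes come from a measure, obtained by cutting
`[0, 1)` into nested intervals, and this measure is unique because the events `{S ⊆ ξ}` form a
π-system generating the product σ-algebra.
-/
open MeasureTheory

/-- The standard basis vector `e_x` of `l²(E)`. -/
noncomputable def evec {E : Type*} [DecidableEq E] (x : E) : lp (fun _ : E => ℂ) 2 :=
  lp.single 2 x 1

open scoped ComplexOrder MatrixOrder Matrix.Norms.L2Operator InnerProductSpace
open Matrix

namespace DPP

section ConfigMatrix

variable {ι R : Type*} [Fintype ι] [DecidableEq ι] [CommRing R]

lemma det_eq_det_submatrix_of_row_eq_one (N : Matrix ι ι R) (P : ι → Prop) [DecidablePred P]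
    (h : ∀ i, ¬ P i → ∀ j, N i j = (1 : Matrix ι ι R) i j) :
    N.det = (N.submatrix ((↑) : {i // P i} → ι) (↑)).det := by
  rw [← det_submatrix_equiv_self (Equiv.sumCompl P) N]
  have hblocks : N.submatrix (Equiv.sumCompl P) (Equiv.sumCompl P) =
      fromBlocks (N.submatrix (↑) (↑)) (N.submatrix (↑) (↑)) 0 1 := by
    ext (i | i) (j | j)
    · rfl
    · rfl
    · have hij : (i : ι) ≠ j := fun hij => i.2 (hij ▸ j.2)
      simp [h i i.2, one_apply, hij]
    · simp [h i i.2, one_apply, Subtype.ext_iff]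
  rw [hblocks, det_fromBlocks_zero₂₁, det_one, mul_one]

/-- For the determinantal process with kernel `A`, the determinant of `configMatrix A s` is the
probability of the configuration `s`. -/
def configMatrix (A : Matrix ι ι R) (s : ι → Bool) : Matrix ι ι R :=
  of fun i j => if s i then A i j else (1 - A) i j

lemma sum_det_configMatrix (A : Matrix ι ι R) (T : ι → Finset Bool) :
    ∑ s ∈ Fintype.piFinset T, (configMatrix A s).det =
      (of fun i j => ∑ b ∈ T i, if b then A i j else (1 - A) i j).det := by
  have := detRowAlternating.toMultilinearMap.map_sum_finset
    (fun i (b : Bool) j => if b then A i j else (1 - A) i j) T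
  simp only [Finset.sum_fn] at this
  exact this.symm

lemma sum_det_configMatrix_eq_det_submatrix (A : Matrix ι ι R) (P : ι → Prop) [DecidablePred P] :
    ∑ s ∈ Fintype.piFinset (fun i => if P i then {true} else Finset.univ),
      (configMatrix A s).det = (A.submatrix ((↑) : {i // P i} → ι) (↑)).det := by
  rw [sum_det_configMatrix, det_eq_det_submatrix_of_row_eq_one _ P]
  · congr 1
    ext i j
    simp [i.2]
  · intro i hi j
    simp [hi]

lemma det_configMatrix_snoc {n : ℕ} (A : Matrix (Fin (n + 1)) (Fin (n + 1)) R) (s : Fin n → Bool) :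
    (configMatrix A (Fin.snoc s false)).det + (configMatrix A (Fin.snoc s true)).det =
      (configMatrix (A.submatrix Fin.castSucc Fin.castSucc) s).det := by
  have hrow : ∀ b, configMatrix A (Fin.snoc s b) = (configMatrix A (Fin.snoc s true)).updateRow
      (Fin.last n) (fun j => if b then A (Fin.last n) j else (1 - A) (Fin.last n) j) := by
    intro b
    ext i j
    rcases Fin.eq_castSucc_or_eq_last i with ⟨i, rfl⟩ | rfl <;> simp [configMatrix]
  rw [hrow false]
  nth_rw 2 [hrow true]
  rw [← det_updateRow_add, det_eq_det_submatrix_of_row_eq_one _ (· ≠ Fin.last n) (by simp),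
    ← det_submatrix_equiv_self (finSuccAboveEquiv (Fin.last n))]
  congr 1
  ext i j
  simp [configMatrix, finSuccAboveEquiv_apply, one_apply]

end ConfigMatrix

section Nonneg

variable {ι 𝕜 : Type*} [Fintype ι] [DecidableEq ι] [RCLike 𝕜]

lemma det_configMatrix_nonneg_of_posDef {A : Matrix ι ι 𝕜} (hA : A.PosSemidef)
    (hA' : (1 - A).PosDef) (s : ι → Bool) : 0 ≤ (configMatrix A s).det := by
  set C := 1 - A
  have hC : IsUnit C.det := (isUnit_iff_isUnit_det C).1 hA'.isUnit
  have hcomm : Commute A C⁻¹ := by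
    have hA_eq : A = 1 - C := by simp [C]
    rw [hA_eq, Commute, SemiconjBy, sub_mul, mul_sub, mul_nonsing_inv _ hC,
      nonsing_inv_mul _ hC, one_mul, mul_one]
  have hR : (A * C⁻¹).PosSemidef :=
    (hcomm.mul_nonneg hA.nonneg hA'.inv.posSemidef.nonneg).posSemidef
  set T : Matrix ι ι 𝕜 := of fun i j => if s i then (A * C⁻¹) i j else (1 : Matrix ι ι 𝕜) i j
  have hTC : T * C = configMatrix A s := by
    ext i j
    by_cases hi : s i
    · rw [mul_apply]
      simp only [T, configMatrix, of_apply, hi, if_true]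
      rw [← mul_apply, mul_assoc, nonsing_inv_mul _ hC, mul_one]
    · rw [mul_apply]
      simp only [T, configMatrix, of_apply, hi, Bool.false_eq_true, if_false]
      rw [← mul_apply, one_mul]
  have hT : 0 ≤ T.det := by
    rw [det_eq_det_submatrix_of_row_eq_one T (fun i => s i = true) (by simp_all [T])]
    convert (hR.submatrix ((↑) : {i // s i = true} → ι)).det_nonneg using 2
    ext i j
    simp [T, i.2]
  rw [← hTC, det_mul]
  exact mul_nonneg hT hA'.det_pos.le

lemma det_configMatrix_nonneg {A : Matrix ι ι 𝕜} (hA : A.PosSemidef) (hA' : (1 - A).PosSemidef)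
    (s : ι → Bool) : 0 ≤ (configMatrix A s).det := by
  have hpos : ∀ t ∈ Set.Ioo (0 : ℝ) 1, 0 ≤ (configMatrix (t • A) s).det := by
    intro t ht
    refine det_configMatrix_nonneg_of_posDef (hA.smul ht.1.le) ?_ s
    have hsplit : 1 - t • A = t • (1 - A) + (1 - t) • (1 : Matrix ι ι 𝕜) := by
      rw [smul_sub, sub_smul, one_smul]; abel
    rw [hsplit]
    exact (PosDef.one.smul (sub_pos.2 ht.2)).posSemidef_add (hA'.smul ht.1.le)
  have hcont : Continuous fun t : ℝ => (configMatrix (t • A) s).det := by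
    refine Continuous.matrix_det (continuous_matrix fun i j => ?_)
    simp only [configMatrix, of_apply]
    split_ifs <;> fun_prop
  have htend : Filter.Tendsto (fun t : ℝ => (configMatrix (t • A) s).det) (nhdsWithin 1 (Set.Iio 1))
      (nhds (configMatrix A s).det) := by
    simpa using (hcont.tendsto 1).mono_left nhdsWithin_le_nhds
  exact ge_of_tendsto htend (Filter.mem_of_superset (Ioo_mem_nhdsLT zero_lt_one) hpos)

end Nonneg

section Containing

variable {E : Type*}

def containing (S : Finset E) : Set (E → Bool) := {ξ | ∀ x ∈ S, ξ x = true}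

lemma measurableSet_containing (S : Finset E) : MeasurableSet (containing S) := by
  simp only [containing, Set.ofPred_forall]
  exact .biInter S.countable_toSet fun x _ =>
    measurableSet_eq_fun (measurable_pi_apply x) measurable_const

lemma containing_empty : containing (∅ : Finset E) = Set.univ := by
  simp [containing]

lemma preimage_containing {β : Type*} {f : E → β} (hf : f.Injective) (S : Finset E) :
    (fun (ξ : β → Bool) (x : E) => ξ (f x)) ⁻¹' containing S = containing (S.map ⟨f, hf⟩) := by
  ext ξ
  simp [containing]

lemma isPiSystem_containing : IsPiSystem (Set.range (containing : Finset E → Set (E → Bool))) := by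
  classical
  rintro _ ⟨S, rfl⟩ _ ⟨T, rfl⟩ -
  refine ⟨S ∪ T, ?_⟩
  ext ξ
  simp only [containing, Set.mem_inter_iff, Set.mem_ofPred_eq, Finset.mem_union, or_imp,
    forall_and]

lemma generateFrom_containing :
    MeasurableSpace.generateFrom (Set.range (containing : Finset E → Set (E → Bool))) =
      MeasurableSpace.pi := by
  refine le_antisymm (MeasurableSpace.generateFrom_le ?_) ?_
  · rintro _ ⟨S, rfl⟩
    exact measurableSet_containing S
  · have : Measurable[MeasurableSpace.generateFrom (Set.range containing)]
        (id : (E → Bool) → E → Bool) :=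
      (@measurable_pi_iff (E → Bool) E (fun _ => Bool) (.generateFrom _) _ id).2 fun x =>
        measurable_to_bool <|
          MeasurableSpace.measurableSet_generateFrom ⟨{x}, by ext; simp [containing]⟩
    simpa using measurable_iff_comap_le.1 this

lemma ext_of_measure_containing {μ ν : Measure (E → Bool)} [IsProbabilityMeasure μ]
    [IsProbabilityMeasure ν]
    (h : ∀ S : Finset E, S.Nonempty → μ (containing S) = ν (containing S)) : μ = ν := by
  refine ext_of_generate_finite _ generateFrom_containing.symm isPiSystem_containing ?_ (by simp)
  rintro _ ⟨S, rfl⟩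
  rcases S.eq_empty_or_nonempty with rfl | hS
  · simp [containing_empty]
  · exact h S hS

end Containing

section SequenceMeasure

variable (w : (n : ℕ) → (Fin n → Bool) → ℝ)

/-- The prefix `s` of length `n` is assigned the interval `[leftEnd w n s, leftEnd w n s + w n s)`;
the intervals of `Fin.snoc s false` and `Fin.snoc s true` follow each other inside it. -/
noncomputable def leftEnd : (n : ℕ) → (Fin n → Bool) → ℝ
  | 0, _ => 0
  | n + 1, s => leftEnd n (Fin.init s) +
      if s (Fin.last n) then w (n + 1) (Fin.snoc (Fin.init s) false) else 0

/-- The prefix of length `n` whose interval contains `t`. -/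
noncomputable def prefixOf : (n : ℕ) → ℝ → Fin n → Bool
  | 0, _ => Fin.elim0
  | n + 1, t => Fin.snoc (prefixOf n t) (decide
      (leftEnd w n (prefixOf n t) + w (n + 1) (Fin.snoc (prefixOf n t) false) ≤ t))

noncomputable def sequenceOf (t : ℝ) (k : ℕ) : Bool := prefixOf w (k + 1) t (Fin.last k)

lemma leftEnd_snoc (n : ℕ) (s : Fin n → Bool) (b : Bool) :
    leftEnd w (n + 1) (Fin.snoc s b) =
      leftEnd w n s + if b then w (n + 1) (Fin.snoc s false) else 0 := by
  simp [leftEnd]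

lemma prefixOf_apply (n : ℕ) (t : ℝ) (i : Fin n) : prefixOf w n t i = sequenceOf w t i := by
  induction n with
  | zero => exact i.elim0
  | succ n ih =>
    rcases Fin.eq_castSucc_or_eq_last i with ⟨i, rfl⟩ | rfl
    · simp only [prefixOf, Fin.snoc_castSucc, ih, Fin.val_castSucc]
    · rfl

lemma measurable_prefixOf (n : ℕ) : Measurable (prefixOf w n) := by
  induction n with
  | zero => exact measurable_const' fun _ _ => Subsingleton.elim _ _
  | succ n ih =>
    have hstep : Measurable fun p : (Fin n → Bool) × ℝ => (Fin.snoc p.1 (decide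
        (leftEnd w n p.1 + w (n + 1) (Fin.snoc p.1 false) ≤ p.2)) : Fin (n + 1) → Bool) := by
      refine measurable_from_prod_countable_right fun u => ?_
      refine (measurable_of_countable (fun b : Bool => (Fin.snoc u b : Fin (n + 1) → Bool))).comp ?_
      have hIci : MeasurableSet (Set.Ici (leftEnd w n u + w (n + 1) (Fin.snoc u false))) :=
        measurableSet_Ici
      exact measurable_to_bool (by simpa [Set.preimage] using measurableSet_setOfPred.1 hIci)
    exact hstep.comp (ih.prodMk measurable_id)

lemma measurable_sequenceOf : Measurable (sequenceOf w) :=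
  measurable_pi_lambda _ fun k => (measurable_pi_apply _).comp (measurable_prefixOf w (k + 1))

variable {w} (hw_nonneg : ∀ n s, 0 ≤ w n s) (hw_snoc : ∀ n s,
  w (n + 1) (Fin.snoc s false) + w (n + 1) (Fin.snoc s true) = w n s) (hw_zero : ∀ s, w 0 s = 1)

include hw_nonneg hw_snoc in
lemma interval_snoc_subset (n : ℕ) (s : Fin n → Bool) (b : Bool) :
    leftEnd w n s ≤ leftEnd w (n + 1) (Fin.snoc s b) ∧
      leftEnd w (n + 1) (Fin.snoc s b) + w (n + 1) (Fin.snoc s b) ≤ leftEnd w n s + w n s := by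
  have := hw_snoc n s
  have := hw_nonneg (n + 1) (Fin.snoc s false)
  have := hw_nonneg (n + 1) (Fin.snoc s true)
  cases b <;> simp only [leftEnd_snoc, if_true, Bool.false_eq_true, if_false] <;>
    constructor <;> linarith

include hw_nonneg hw_snoc hw_zero in
lemma leftEnd_nonneg_and_le_one (n : ℕ) (s : Fin n → Bool) :
    0 ≤ leftEnd w n s ∧ leftEnd w n s + w n s ≤ 1 := by
  induction n with
  | zero => simp [leftEnd, hw_zero]
  | succ n ih =>
    obtain ⟨h₁, h₂⟩ := interval_snoc_subset hw_nonneg hw_snoc n (Fin.init s) (s (Fin.last n))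
    rw [Fin.snoc_init_self] at h₁ h₂
    exact ⟨(ih _).1.trans h₁, h₂.trans (ih _).2⟩

include hw_nonneg hw_snoc hw_zero in
lemma prefixOf_eq_iff (n : ℕ) {t : ℝ} (ht : t ∈ Set.Ico (0 : ℝ) 1) (s : Fin n → Bool) :
    prefixOf w n t = s ↔ t ∈ Set.Ico (leftEnd w n s) (leftEnd w n s + w n s) := by
  induction n with
  | zero => simpa [leftEnd, hw_zero, funext_iff] using ht
  | succ n ih =>
    obtain ⟨v, b, rfl⟩ : ∃ v b, s = Fin.snoc v b :=
      ⟨Fin.init s, s (Fin.last n), (Fin.snoc_init_self s).symm⟩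
    have hu := (ih (prefixOf w n t)).1 rfl
    have hsplit := hw_snoc n (prefixOf w n t)
    obtain ⟨h₁, h₂⟩ := interval_snoc_subset hw_nonneg hw_snoc n v b
    rw [leftEnd_snoc] at h₁ h₂ ⊢
    rw [prefixOf, Fin.snoc_inj]
    constructor
    · rintro ⟨rfl, rfl⟩
      by_cases hc : leftEnd w n (prefixOf w n t) + w (n + 1) (Fin.snoc (prefixOf w n t) false) ≤ t
      · simp only [hc, decide_true, if_true, Set.mem_Ico, true_and]
        linarith [hu.2]
      · simp only [hc, decide_false, Bool.false_eq_true, if_false, add_zero, Set.mem_Ico]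
        exact ⟨hu.1, not_le.1 hc⟩
    · intro hts
      obtain rfl : prefixOf w n t = v := (ih v).2 ⟨h₁.trans hts.1, hts.2.trans_le h₂⟩
      cases b <;> simp_all

include hw_nonneg hw_snoc hw_zero in
theorem exists_isProbabilityMeasure_prefix :
    ∃ μ : Measure (ℕ → Bool), IsProbabilityMeasure μ ∧
      ∀ n (s : Fin n → Bool), μ ((fun ξ (i : Fin n) => ξ i) ⁻¹' {s}) = ENNReal.ofReal (w n s) := by
  have hmeas := measurable_sequenceOf w
  have : IsProbabilityMeasure (volume.restrict (Set.Ico (0 : ℝ) 1)) := ⟨by simp⟩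
  refine ⟨(volume.restrict (Set.Ico (0 : ℝ) 1)).map (sequenceOf w),
    Measure.isProbabilityMeasure_map hmeas.aemeasurable, fun n s => ?_⟩
  have hpre : sequenceOf w ⁻¹' ((fun ξ (i : Fin n) => ξ i) ⁻¹' {s}) ∩ Set.Ico 0 1 =
      Set.Ico (leftEnd w n s) (leftEnd w n s + w n s) := by
    ext t
    simp only [Set.mem_inter_iff, Set.mem_preimage, Set.mem_singleton_iff,
      ← funext (prefixOf_apply w n t)]
    constructor
    · rintro ⟨h, ht⟩
      exact (prefixOf_eq_iff hw_nonneg hw_snoc hw_zero n ht s).1 h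
    · intro hts
      obtain ⟨h₀, h₁⟩ := leftEnd_nonneg_and_le_one hw_nonneg hw_snoc hw_zero n s
      have ht : t ∈ Set.Ico (0 : ℝ) 1 := ⟨h₀.trans hts.1, hts.2.trans_le h₁⟩
      exact ⟨(prefixOf_eq_iff hw_nonneg hw_snoc hw_zero n ht s).2 hts, ht⟩
  rw [Measure.map_apply hmeas
      ((measurable_pi_lambda _ fun i => measurable_pi_apply _) (measurableSet_singleton s)),
    Measure.restrict_apply' measurableSet_Ico, hpre, Real.volume_Ico, add_sub_cancel_left]

end SequenceMeasure

section NatKernel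

variable (M : ℕ → ℕ → ℂ)

noncomputable def configWeight (n : ℕ) (s : Fin n → Bool) : ℝ :=
  (configMatrix (of fun i j : Fin n => M i j) s).det.re

lemma configWeight_zero (s : Fin 0 → Bool) : configWeight M 0 s = 1 := by
  simp [configWeight]

lemma configWeight_snoc (n : ℕ) (s : Fin n → Bool) :
    configWeight M (n + 1) (Fin.snoc s false) + configWeight M (n + 1) (Fin.snoc s true) =
      configWeight M n s := by
  rw [configWeight, configWeight, ← Complex.add_re, det_configMatrix_snoc]
  rfl

variable {M} (hM : ∀ n, (of fun i j : Fin n => M i j).PosSemidef)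
  (hM' : ∀ n, (1 - of fun i j : Fin n => M i j).PosSemidef)

include hM hM' in
lemma ofReal_configWeight (n : ℕ) (s : Fin n → Bool) :
    (configWeight M n s : ℂ) = (configMatrix (of fun i j : Fin n => M i j) s).det := by
  obtain ⟨x, -, hx⟩ := RCLike.nonneg_iff_exists_ofReal.1
    (det_configMatrix_nonneg (hM n) (hM' n) s)
  rw [configWeight, ← hx]
  simp

include hM hM' in
lemma configWeight_nonneg (n : ℕ) (s : Fin n → Bool) : 0 ≤ configWeight M n s :=
  (Complex.nonneg_iff.1 (det_configMatrix_nonneg (hM n) (hM' n) s)).1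

lemma det_submatrix_fin_eq_det {n : ℕ} (S : Finset ℕ) (hS : ∀ i ∈ S, i < n) :
    ((of fun i j : Fin n => M i j).submatrix ((↑) : {i : Fin n // (i : ℕ) ∈ S} → Fin n) (↑)).det =
      (of fun i j : S => M i j).det := by
  let e : {i : Fin n // (i : ℕ) ∈ S} ≃ S :=
    { toFun := fun i => ⟨i.1, i.2⟩
      invFun := fun i => ⟨⟨i, hS i i.2⟩, i.2⟩
      left_inv := fun _ => rfl
      right_inv := fun _ => rfl }
  rw [← det_submatrix_equiv_self e]
  rfl

include hM hM' in
theorem exists_isProbabilityMeasure_det_nat :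
    ∃ μ : Measure (ℕ → Bool), IsProbabilityMeasure μ ∧ ∀ S : Finset ℕ,
      ((μ (containing S)).toReal : ℂ) = (of fun i j : S => M i j).det := by
  obtain ⟨μ, hμ, hprefix⟩ := exists_isProbabilityMeasure_prefix (configWeight_nonneg hM hM')
    (configWeight_snoc M) (configWeight_zero M)
  refine ⟨μ, hμ, fun S => ?_⟩
  set n := S.sup id + 1
  have hS : ∀ i ∈ S, i < n := fun i hi => Nat.lt_succ_of_le (Finset.le_sup (f := id) hi)
  set A := Fintype.piFinset fun i : Fin n => if (i : ℕ) ∈ S then {true} else Finset.univ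
  have hcyl : containing S = (fun ξ (i : Fin n) => ξ i) ⁻¹' A := by
    ext ξ
    simp only [containing, Set.mem_ofPred_eq, Set.mem_preimage, Finset.mem_coe, A,
      Fintype.mem_piFinset]
    refine ⟨fun h i => ?_, fun h i hi => ?_⟩
    · split_ifs with hi
      · simp [h _ hi]
      · exact Finset.mem_univ _
    · simpa [hi] using h ⟨i, hS i hi⟩
  rw [hcyl, ← sum_measure_preimage_singleton A fun s _ =>
      (measurable_pi_lambda _ fun i => measurable_pi_apply _) (measurableSet_singleton s),
    ENNReal.toReal_sum fun s _ => measure_ne_top μ _, ← det_submatrix_fin_eq_det S hS,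
    ← sum_det_configMatrix_eq_det_submatrix]
  push_cast
  refine Finset.sum_congr rfl fun s _ => ?_
  rw [hprefix, ENNReal.toReal_ofReal (configWeight_nonneg hM hM' n s), ofReal_configWeight hM hM']

end NatKernel

section InnerMatrix

variable {H ι : Type*} [NormedAddCommGroup H] [InnerProductSpace ℂ H]
  (K : H →L[ℂ] H) (u : ι → H)

lemma dotProduct_mulVec_inner [Fintype ι] (v : ι → ℂ) :
    star v ⬝ᵥ (of fun i j => ⟪u i, K (u j)⟫_ℂ) *ᵥ v =
      ⟪∑ i, v i • u i, K (∑ i, v i • u i)⟫_ℂ := by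
  simp only [map_sum, map_smul, sum_inner, inner_sum, inner_smul_left, inner_smul_right,
    dotProduct, mulVec, of_apply, Pi.star_apply, RCLike.star_def, Finset.mul_sum]
  rw [Finset.sum_comm]
  exact Finset.sum_congr rfl fun i _ => Finset.sum_congr rfl fun j _ => by ring

lemma inner_sum_smul_self_of_pairwise [Fintype ι] (hu : Pairwise fun i j => ⟪u i, u j⟫_ℂ = 0)
    (v : ι → ℂ) :
    ⟪∑ i, v i • u i, ∑ i, v i • u i⟫_ℂ = ((∑ i, ‖v i‖ ^ 2 * ‖u i‖ ^ 2 : ℝ) : ℂ) := by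
  simp only [sum_inner, inner_sum, inner_smul_left, inner_smul_right]
  push_cast
  refine Finset.sum_congr rfl fun i _ => ?_
  rw [Finset.sum_eq_single i (fun j _ hji => by simp [hu hji])
    (by simp), inner_self_eq_norm_sq_to_K, ← mul_assoc, RCLike.mul_conj]
  rfl

variable {K}
variable (hsa : ∀ f g : H, ⟪K f, g⟫_ℂ = ⟪f, K g⟫_ℂ)

include hsa in
lemma isHermitian_inner : (of fun i j => ⟪u i, K (u j)⟫_ℂ).IsHermitian := by
  ext i j
  simp [← hsa]

include hsa in
lemma inner_apply_self_im_eq_zero (f : H) : (⟪f, K f⟫_ℂ).im = 0 := by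
  rw [← Complex.conj_eq_iff_im, inner_conj_symm, hsa]

include hsa in
lemma posSemidef_inner [Fintype ι] (hpos : ∀ f : H, 0 ≤ (⟪f, K f⟫_ℂ).re) :
    (of fun i j => ⟪u i, K (u j)⟫_ℂ).PosSemidef := by
  refine PosSemidef.of_dotProduct_mulVec_nonneg (isHermitian_inner u hsa) fun v => ?_
  rw [dotProduct_mulVec_inner, Complex.nonneg_iff]
  exact ⟨hpos _, (inner_apply_self_im_eq_zero hsa _).symm⟩

include hsa in
lemma posSemidef_one_sub_inner (hle : ∀ f : H, (⟪f, K f⟫_ℂ).re ≤ (⟪f, f⟫_ℂ).re)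
    [Fintype ι] [DecidableEq ι] (hu : Pairwise fun i j => ⟪u i, u j⟫_ℂ = 0)
    (hu_norm : ∀ i, ‖u i‖ ≤ 1) :
    (1 - of fun i j => ⟪u i, K (u j)⟫_ℂ).PosSemidef := by
  refine PosSemidef.of_dotProduct_mulVec_nonneg
    (isHermitian_one.sub (isHermitian_inner u hsa)) fun v => ?_
  have hvv : star v ⬝ᵥ v = ((∑ i, ‖v i‖ ^ 2 : ℝ) : ℂ) := by
    simp [dotProduct, RCLike.conj_mul]
  have hgg := inner_sum_smul_self_of_pairwise u hu v
  have hle' : ∑ i, ‖v i‖ ^ 2 * ‖u i‖ ^ 2 ≤ ∑ i, ‖v i‖ ^ 2 := Finset.sum_le_sum fun i _ =>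
    mul_le_of_le_one_right (by positivity) (pow_le_one₀ (norm_nonneg _) (hu_norm i))
  have := hle (∑ i, v i • u i)
  rw [hgg, Complex.ofReal_re] at this
  rw [sub_mulVec, dotProduct_sub, one_mulVec, dotProduct_mulVec_inner, hvv, Complex.nonneg_iff,
    Complex.sub_re, Complex.sub_im, Complex.ofReal_re, Complex.ofReal_im,
    inner_apply_self_im_eq_zero hsa]
  constructor <;> linarith

end InnerMatrix

section Extend

variable {E β H : Type*} [NormedAddCommGroup H] [InnerProductSpace ℂ H] {v : E → H}
  (hv : Orthonormal ℂ v) {f : E → β} (hf : f.Injective)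

include hv hf in
lemma pairwise_inner_extend_eq_zero :
    Pairwise fun i j => ⟪Function.extend f v 0 i, Function.extend f v 0 j⟫_ℂ = 0 := by
  intro i j hij
  by_cases hi : ∃ x, f x = i
  · by_cases hj : ∃ y, f y = j
    · obtain ⟨⟨x, rfl⟩, ⟨y, rfl⟩⟩ := And.intro hi hj
      rw [hf.extend_apply, hf.extend_apply]
      exact hv.2 fun hxy => hij (congrArg f hxy)
    · simp [Function.extend_apply' _ _ _ hj]
  · simp [Function.extend_apply' _ _ _ hi]

include hv hf in
lemma norm_extend_le_one (i : β) : ‖Function.extend f v 0 i‖ ≤ 1 := by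
  by_cases hi : ∃ x, f x = i
  · obtain ⟨x, rfl⟩ := hi
    rw [hf.extend_apply, hv.1 x]
  · simp [Function.extend_apply' _ _ _ hi]

end Extend

section Evec

variable {E : Type*} [DecidableEq E]

lemma orthonormal_evec : Orthonormal ℂ (evec : E → lp (fun _ : E => ℂ) 2) := by
  rw [orthonormal_iff_ite]
  intro x y
  rw [evec, evec, lp.inner_single_left, lp.single_apply]
  split_ifs <;> simp_all

theorem exists_isProbabilityMeasure_det_evec [Countable E]
    (K : lp (fun _ : E => ℂ) 2 →L[ℂ] lp (fun _ : E => ℂ) 2)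
    (hsa : ∀ f g, ⟪K f, g⟫_ℂ = ⟪f, K g⟫_ℂ) (hpos : ∀ f, 0 ≤ (⟪f, K f⟫_ℂ).re)
    (hle : ∀ f, (⟪f, K f⟫_ℂ).re ≤ (⟪f, f⟫_ℂ).re) :
    ∃ μ : Measure (E → Bool), IsProbabilityMeasure μ ∧ ∀ S : Finset E,
      ((μ (containing S)).toReal : ℂ) =
        (of fun i j : S => ⟪evec (i : E), K (evec (j : E))⟫_ℂ).det := by
  obtain ⟨f, hf⟩ := Countable.exists_injective_nat E
  -- The kernel on `ℕ` is `K` on the image of `f` and vanishes off it.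
  set u := Function.extend f evec (0 : ℕ → lp (fun _ : E => ℂ) 2)
  obtain ⟨μ, hμ, hdet⟩ := exists_isProbabilityMeasure_det_nat (M := fun i j => ⟪u i, K (u j)⟫_ℂ)
    (fun n => posSemidef_inner (fun i : Fin n => u i) hsa hpos)
    (fun n => posSemidef_one_sub_inner (fun i : Fin n => u i) hsa hle
      ((pairwise_inner_extend_eq_zero orthonormal_evec hf).comp_of_injective Fin.val_injective)
      fun i => norm_extend_le_one orthonormal_evec hf i)
  have hmeas : Measurable fun (ξ : ℕ → Bool) (x : E) => ξ (f x) :=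
    measurable_pi_lambda _ fun x => measurable_pi_apply _
  refine ⟨μ.map _, Measure.isProbabilityMeasure_map hmeas.aemeasurable, fun S => ?_⟩
  rw [Measure.map_apply hmeas (measurableSet_containing S), preimage_containing hf, hdet,
    ← det_submatrix_equiv_self (S.equivMap ⟨f, hf⟩)]
  congr 1
  ext x y
  simp [u, hf.extend_apply]

end Evec

end DPP

/-- **Existence and uniqueness of the determinantal point process.**
Let `E` be a countable set and `K` a bounded self-adjoint operator on `l²(E)` with
`0 ≤ K ≤ I`.  Then there is a unique probability measure `μ` on `X = {0,1}^E` (with the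
product σ-algebra) such that for every nonempty finite `S = {x₁,…,xₙ} ⊆ E`,
`μ {ξ : S ⊆ ξ} = det (K(xᵢ,xⱼ))`, where `K(x,y) = ⟨e_x, K e_y⟩`. -/
theorem statement0 {E : Type*} [Countable E] [DecidableEq E]
    (K : lp (fun _ : E => ℂ) 2 →L[ℂ] lp (fun _ : E => ℂ) 2)
    (hsa : ∀ f g : lp (fun _ : E => ℂ) 2, (inner ℂ (K f) g : ℂ) = inner ℂ f (K g))
    (hpos : ∀ f : lp (fun _ : E => ℂ) 2, 0 ≤ (inner ℂ f (K f) : ℂ).re)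
    (hle : ∀ f : lp (fun _ : E => ℂ) 2, (inner ℂ f (K f) : ℂ).re ≤ (inner ℂ f f : ℂ).re) :
    ∃! μ : Measure (E → Bool),
      IsProbabilityMeasure μ ∧
      ∀ S : Finset E, S.Nonempty →
        ((μ {ξ : E → Bool | ∀ x ∈ S, ξ x = true}).toReal : ℂ) =
          Matrix.det (Matrix.of fun i j : S =>
            (inner ℂ (evec (i : E)) (K (evec (j : E))) : ℂ)) := by
  obtain ⟨μ, hμ, hdet⟩ := DPP.exists_isProbabilityMeasure_det_evec K hsa hpos hle
  refine ⟨μ, ⟨hμ, fun S _ => hdet S⟩, fun ν ⟨hν, hνdet⟩ => ?_⟩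
  refine DPP.ext_of_measure_containing fun S hS => ?_
  have hreal : ((ν (DPP.containing S)).toReal : ℂ) = (μ (DPP.containing S)).toReal :=
    (hνdet S hS).trans (hdet S).symm
  exact (ENNReal.toReal_eq_toReal_iff' (measure_ne_top _ _) (measure_ne_top _ _)).1
    (mod_cast hreal)
end

section
/- Let μ be the determinantal point process on X = {0,1}^E with kernel K (bounded self-adjoint, 0 ≤ K ≤ I), and let Λ ⊆ E be a finite set such that the finite matrix I_Λ − K_Λ is invertible, where K_Λ := (K(x,y))_{x,y∈Λ}. Set A_{[Λ]} := K_Λ(I_Λ − K_Λ)^{-1}. Then for every subset ζ ⊆ Λ, μ({ξ ∈ X : ξ ∩ Λ = ζ}) = det(I_Λ − K_Λ) · det (A_{[Λ]}(x,y))_{x,y∈ζ}, where the determinant over the empty set is 1. -/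
open MeasureTheory

/-- The matrix entries `K(x,y) = ⟨e_x, K e_y⟩` of a bounded operator on `l²(E)`. -/
noncomputable def matEnt {E : Type*} [DecidableEq E]
    (K : lp (fun _ : E => ℂ) 2 →L[ℂ] lp (fun _ : E => ℂ) 2) (x y : E) : ℂ :=
  inner ℂ (evec x) (K (evec y))

/-!
The event `ξ ∩ Λ = ζ` says that `ξ` contains `ζ` and misses every point of `Λ \ ζ`, so
inclusion–exclusion writes its probability as `∑_{T ⊆ Λ \ ζ} (-1)^|T| det K_{ζ ∪ T}`.
On the other side, `det (I - K_Λ) · det (A_{[Λ]})_ζ` is the determinant of the matrix whose rows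
in `ζ` are those of `A_{[Λ]} (I - K_Λ) = K_Λ` and whose other rows are those of `I - K_Λ`:
multiply `I - K_Λ` on the left by `A_{[Λ]}` with its rows outside `ζ` replaced by identity rows.
Expanding the rows `e_x - K_Λ(x, ·)` multilinearly gives the same alternating sum of principal
minors of `K_Λ`.
-/

open Finset Matrix

namespace MeasureTheory

theorem measureReal_inter_biInter_compl_eq_sum_powerset {α ι : Type*} [MeasurableSpace α]
    [DecidableEq ι] (μ : Measure α) [IsFiniteMeasure μ] {S : ι → Set α}
    (hS : ∀ i, MeasurableSet (S i)) (B : Set α) (D : Finset ι) :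
    μ.real (B ∩ ⋂ i ∈ D, (S i)ᶜ) =
      ∑ T ∈ D.powerset, (-1 : ℝ) ^ #T * μ.real (B ∩ ⋂ i ∈ T, S i) := by
  induction D using Finset.induction_on generalizing B with
  | empty => simp
  | @insert a D ha ih =>
    have hsplit := measureReal_sdiff_add_inter (μ := μ) (s := B ∩ ⋂ i ∈ D, (S i)ᶜ) (hS a)
    have hdiff : (B ∩ ⋂ i ∈ D, (S i)ᶜ) \ S a = B ∩ ⋂ i ∈ insert a D, (S i)ᶜ := by
      rw [set_biInter_insert]
      grind
    have hinter : (B ∩ ⋂ i ∈ D, (S i)ᶜ) ∩ S a = (B ∩ S a) ∩ ⋂ i ∈ D, (S i)ᶜ :=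
      Set.inter_right_comm _ _ _
    rw [hdiff, hinter, ih, ih] at hsplit
    rw [eq_sub_of_add_eq hsplit, sum_powerset_insert ha, sub_eq_add_neg, ← sum_neg_distrib]
    congr 1
    refine sum_congr rfl fun T hT => ?_
    rw [card_insert_of_notMem (notMem_of_mem_powerset_of_notMem hT ha), set_biInter_insert,
      ← Set.inter_assoc]
    ring

end MeasureTheory

namespace Matrix
variable {n R : Type*} [Fintype n] [DecidableEq n] [CommRing R]

theorem of_piecewise_row_mul (s : Finset n) (P Q N : Matrix n n R) :
    of (s.piecewise P.row Q.row) * N = of (s.piecewise (P * N).row (Q * N).row) := by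
  ext i j
  by_cases hi : i ∈ s <;> simp [hi, mul_apply]

theorem det_piecewise_row_neg (M : Matrix n n R) (z T : Finset n) :
    det (of (T.piecewise (-M).row (z.piecewise M.row (1 : Matrix n n R).row))) =
      (-1) ^ #T * (M.submatrix (↑) (↑) : Matrix ↥(z ∪ T) ↥(z ∪ T) R).det := by
  have hrows : T.piecewise (-M).row (z.piecewise M.row (1 : Matrix n n R).row) =
      T.piecewise (fun i => (-1 : R) • (z ∪ T).piecewise M.row (1 : Matrix n n R).row i)
        ((z ∪ T).piecewise M.row (1 : Matrix n n R).row) := by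
    ext i j
    by_cases hT : i ∈ T <;> by_cases hz : i ∈ z <;> simp [hT, hz]
  rw [hrows, ← det_piecewise_one_eq_submatrix_det]
  have h := (detRowAlternating : (n → R) [⋀^n]→ₗ[R] R).map_piecewise_smul (fun _ => -1)
    ((z ∪ T).piecewise M.row (1 : Matrix n n R).row) T
  simp only [prod_const, smul_eq_mul] at h
  exact h

theorem det_piecewise_row_one_sub (M : Matrix n n R) (z : Finset n) :
    det (of (z.piecewise M.row (1 - M).row)) =
      ∑ T ∈ zᶜ.powerset,
        (-1) ^ #T * (M.submatrix (↑) (↑) : Matrix ↥(z ∪ T) ↥(z ∪ T) R).det := by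
  have hrows : zᶜ.piecewise ((-M).row + z.piecewise M.row (1 : Matrix n n R).row)
      (z.piecewise M.row (1 : Matrix n n R).row) = z.piecewise M.row (1 - M).row := by
    ext i j
    by_cases hi : i ∈ z <;> simp [hi, sub_eq_neg_add]
  have hadd := (detRowAlternating : (n → R) [⋀^n]→ₗ[R] R).map_piecewise_add
    (-M).row (z.piecewise M.row (1 : Matrix n n R).row) zᶜ
  rw [hrows] at hadd
  exact hadd.trans (sum_congr rfl fun T _ => det_piecewise_row_neg M z T)

theorem det_one_sub_mul_det_submatrix_mul_inv (M : Matrix n n R) (hM : IsUnit (1 - M))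
    (z : Finset n) :
    (1 - M).det * ((M * (1 - M)⁻¹).submatrix (↑) (↑) : Matrix z z R).det =
      ∑ T ∈ zᶜ.powerset,
        (-1) ^ #T * (M.submatrix (↑) (↑) : Matrix ↥(z ∪ T) ↥(z ∪ T) R).det := by
  have hA : M * (1 - M)⁻¹ * (1 - M) = M := by
    rw [Matrix.mul_assoc, nonsing_inv_mul _ ((isUnit_iff_isUnit_det _).mp hM), Matrix.mul_one]
  rw [← det_piecewise_row_one_sub, ← det_piecewise_one_eq_submatrix_det, mul_comm, ← det_mul,
    of_piecewise_row_mul, hA, Matrix.one_mul]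

theorem det_of_subtype_eq_det_submatrix {E : Type*} [DecidableEq E] {Λ S : Finset E}
    (hS : S ⊆ Λ) (g : Matrix Λ Λ R) :
    det (of fun i j : S => g ⟨i, hS i.2⟩ ⟨j, hS j.2⟩) =
      (g.submatrix (↑) (↑) : Matrix (S.subtype (· ∈ Λ)) (S.subtype (· ∈ Λ)) R).det := by
  let e : S ≃ S.subtype (· ∈ Λ) :=
    { toFun i := ⟨⟨i, hS i.2⟩, mem_subtype.mpr i.2⟩
      invFun i := ⟨i.1, mem_subtype.mp i.2⟩
      left_inv _ := rfl
      right_inv _ := rfl }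
  rw [← det_submatrix_equiv_self e]
  rfl

end Matrix

theorem statement1_general {E : Type*} [DecidableEq E]
    (K : lp (fun _ : E => ℂ) 2 →L[ℂ] lp (fun _ : E => ℂ) 2)
    (μ : Measure (E → Bool)) [IsProbabilityMeasure μ]
    (hcorr : ∀ S : Finset E,
      ((μ {ξ : E → Bool | ∀ x ∈ S, ξ x = true}).toReal : ℂ) =
        Matrix.det (Matrix.of fun i j : S => matEnt K i j))
    (Λ : Finset E)
    (hinv : IsUnit (1 - Matrix.of fun i j : Λ => matEnt K i j))
    (ζ : Finset E) (hζ : ζ ⊆ Λ) :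
    ((μ {ξ : E → Bool | ∀ x ∈ Λ, (ξ x = true ↔ x ∈ ζ)}).toReal : ℂ) =
      Matrix.det (1 - Matrix.of fun i j : Λ => matEnt K i j) *
        Matrix.det (Matrix.of fun i j : ζ =>
          ((Matrix.of fun i j : Λ => matEnt K i j) *
              (1 - Matrix.of fun i j : Λ => matEnt K i j)⁻¹)
            ⟨(i : E), hζ i.2⟩ ⟨(j : E), hζ j.2⟩) := by
  set M : Matrix Λ Λ ℂ := of fun i j => matEnt K i j
  set z : Finset Λ := ζ.subtype (· ∈ Λ)
  let S (i : Λ) : Set (E → Bool) := {ξ | ξ i = true}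
  have hS (i : Λ) : MeasurableSet (S i) :=
    measurableSet_eq_fun (measurable_pi_apply (i : E)) measurable_const
  have hevent : {ξ : E → Bool | ∀ x ∈ Λ, (ξ x = true ↔ x ∈ ζ)} =
      (⋂ i ∈ z, S i) ∩ ⋂ i ∈ zᶜ, (S i)ᶜ := by
    ext ξ
    simp only [Set.mem_ofPred_eq, Set.mem_inter_iff, Set.mem_iInter, Set.mem_compl_iff, mem_compl,
      mem_subtype, S, z, Subtype.forall]
    grind
  have hminor (U : Finset Λ) :
      (μ.real (⋂ i ∈ U, S i) : ℂ) = (M.submatrix (↑) (↑) : Matrix U U ℂ).det := by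
    have hset : ⋂ i ∈ U, S i = {ξ | ∀ x ∈ U.map (.subtype _), ξ x = true} := by
      ext ξ
      simp [S]
    rw [hset, measureReal_def, hcorr, ← det_submatrix_equiv_self (U.equivMap (.subtype _))]
    rfl
  rw [← measureReal_def, hevent, measureReal_inter_biInter_compl_eq_sum_powerset μ hS,
    det_of_subtype_eq_det_submatrix hζ, det_one_sub_mul_det_submatrix_mul_inv M hinv]
  push_cast
  refine sum_congr rfl fun T _ => ?_
  rw [← set_biInter_inter, hminor]

/-- **Local marginals of a determinantal point process.**
Let `μ` be the DPP on `X = {0,1}^E` with kernel `K` (bounded self-adjoint, `0 ≤ K ≤ I`),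
and let `Λ ⊆ E` be finite with `I_Λ - K_Λ` invertible; set `A_{[Λ]} = K_Λ (I_Λ - K_Λ)⁻¹`.
Then for every `ζ ⊆ Λ`,
`μ {ξ : ξ ∩ Λ = ζ} = det (I_Λ - K_Λ) • det (A_{[Λ]}(x,y))_{x,y ∈ ζ}`. -/
theorem statement1 {E : Type*} [Countable E] [DecidableEq E]
    (K : lp (fun _ : E => ℂ) 2 →L[ℂ] lp (fun _ : E => ℂ) 2)
    (hsa : ∀ f g : lp (fun _ : E => ℂ) 2, (inner ℂ (K f) g : ℂ) = inner ℂ f (K g))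
    (hpos : ∀ f : lp (fun _ : E => ℂ) 2, 0 ≤ (inner ℂ f (K f) : ℂ).re)
    (hle : ∀ f : lp (fun _ : E => ℂ) 2, (inner ℂ f (K f) : ℂ).re ≤ (inner ℂ f f : ℂ).re)
    (μ : Measure (E → Bool)) [IsProbabilityMeasure μ]
    (hcorr : ∀ S : Finset E,
      ((μ {ξ : E → Bool | ∀ x ∈ S, ξ x = true}).toReal : ℂ) =
        Matrix.det (Matrix.of fun i j : S => matEnt K i j))
    (Λ : Finset E)
    (hinv : IsUnit (1 - Matrix.of fun i j : Λ => matEnt K i j))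
    (ζ : Finset E) (hζ : ζ ⊆ Λ) :
    ((μ {ξ : E → Bool | ∀ x ∈ Λ, (ξ x = true ↔ x ∈ ζ)}).toReal : ℂ) =
      Matrix.det (1 - Matrix.of fun i j : Λ => matEnt K i j) *
        Matrix.det (Matrix.of fun i j : ζ =>
          ((Matrix.of fun i j : Λ => matEnt K i j) *
              (1 - Matrix.of fun i j : Λ => matEnt K i j)⁻¹)
            ⟨(i : E), hζ i.2⟩ ⟨(j : E), hζ j.2⟩) :=
  statement1_general K μ hcorr Λ hinv ζ hζ
end

section
/- Let A be a bounded self-adjoint operator on l²(E) which is positive and boundedly invertible (so that ⟨f, A f⟩ ≥ λ⟨f,f⟩ for some λ > 0). Let x₀ ∈ E and let E = {x₀} ∪ R₁ ∪ R₂ be a partition of E (R₁ or R₂ may be empty). Define α := inf{⟨e_{x₀} − f, A(e_{x₀} − f)⟩ : f in the linear span of {e_y : y ∈ R₁}} and β := inf{⟨e_{x₀} − g, A^{-1}(e_{x₀} − g)⟩ : g in the linear span of {e_y : y ∈ R₂}}. Then α·β = 1. -/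
/-!
Write `e = e_{x₀}` and `K₁, K₂` for the closures of the two spans. The partition of `E` makes
`l²(E) = ℂe ⊕ K₁ ⊕ K₂` an orthogonal decomposition, i.e. `K₂ = (ℂe ⊔ K₁)ᗮ`.

For `f ∈ K₁` and `g ∈ K₂` one has `⟪e - f, e - g⟫ = 1`, and Cauchy–Schwarz applied to `√A`
gives `1 = |⟪√A (e - f), √A (B (e - g))⟫|² ≤ ⟪e - f, A (e - f)⟫ ⟪e - g, B (e - g)⟫`; hence
`α β ≥ 1`.

Conversely, coercivity makes the compression of `A` to `K₁` invertible, which produces `u ∈ K₁`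
with `A (e - u) ⊥ K₁`. With `a = ⟪e - u, A (e - u)⟫ = ⟪e, A (e - u)⟫`, the vector
`g = e - a⁻¹ A (e - u)` is orthogonal to `e` and to `K₁`, so it lies in `K₂`, and
`⟪e - g, B (e - g)⟫ = a⁻¹`. As the quadratic forms are continuous, the infima over the spans are
at most their values at `u` and `g`, so `α β ≤ a a⁻¹ = 1`.
-/

open scoped InnerProductSpace

theorem one_le_sInf_mul_sInf {s t : Set ℝ} (hs : s.Nonempty) (ht : t.Nonempty)
    (ht₀ : ∀ b ∈ t, 0 ≤ b) (h : ∀ a ∈ s, ∀ b ∈ t, 1 ≤ a * b) : 1 ≤ sInf s * sInf t := by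
  obtain ⟨b₀, hb₀⟩ := ht
  have hpos : ∀ a ∈ s, 0 < a := fun a ha => by
    by_contra! ha'
    nlinarith [h a ha b₀ hb₀, ht₀ b₀ hb₀]
  have hinv : ∀ a ∈ s, a⁻¹ ≤ sInf t := fun a ha =>
    le_csInf ⟨b₀, hb₀⟩ fun b hb => (inv_le_iff_one_le_mul₀' (hpos a ha)).mpr (h a ha b hb)
  obtain ⟨a₀, ha₀⟩ := hs
  have htpos : 0 < sInf t := (inv_pos.mpr (hpos a₀ ha₀)).trans_le (hinv a₀ ha₀)
  have : (sInf t)⁻¹ ≤ sInf s := le_csInf ⟨a₀, ha₀⟩ fun a ha =>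
    (inv_le_comm₀ (hpos a ha) htpos).mp (hinv a ha)
  exact (inv_le_iff_one_le_mul₀ htpos).mp this

theorem csInf_image_le_of_mem_closure {X : Type*} [TopologicalSpace X] {φ : X → ℝ}
    (hφ : Continuous φ) {s : Set X} (hbdd : BddBelow (φ '' s)) {x : X} (hx : x ∈ closure s) :
    sInf (φ '' s) ≤ φ x :=
  isClosed_Ici.closure_subset_iff.mpr (fun _ hy => csInf_le hbdd hy)
    (image_closure_subset_closure_image hφ ⟨x, hx, rfl⟩)

section Hilbert

variable {H : Type*} [NormedAddCommGroup H] [InnerProductSpace ℂ H]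

theorem exists_mem_apply_sub_mem_orthogonal {A : H →L[ℂ] H} {lam : ℝ} (hlam : 0 < lam)
    (hcoer : ∀ x, lam * ‖x‖ ^ 2 ≤ (⟪x, A x⟫_ℂ).re) (K : Submodule ℂ H) [CompleteSpace K]
    (e : H) : ∃ u ∈ K, A (e - u) ∈ Kᗮ := by
  set T : K →L[ℂ] K := K.orthogonalProjectionOnto ∘L A ∘L K.subtypeL
  have hT : IsUnit T := by
    refine ContinuousLinearMap.isUnit_of_forall_le_norm_inner_map T (c := ⟨lam, hlam.le⟩) hlam
      fun u => ?_
    calc ‖u‖ ^ 2 * lam ≤ (⟪(u : H), A u⟫_ℂ).re := by rw [mul_comm]; exact_mod_cast hcoer u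
      _ = (⟪T u, u⟫_ℂ).re := by
        have : T u = K.orthogonalProjectionOnto (A u) := rfl
        rw [this, Submodule.inner_orthogonalProjectionOnto_eq_of_mem_right, ← inner_conj_symm,
          Complex.conj_re]
      _ ≤ ‖⟪T u, u⟫_ℂ‖ := Complex.re_le_norm _
  obtain ⟨u, hu⟩ := (ContinuousLinearMap.isUnit_iff_bijective.mp hT).2
    (K.orthogonalProjectionOnto (A e))
  refine ⟨u, u.2, ?_⟩
  rw [← Submodule.orthogonalProjectionOnto_eq_zero_iff, map_sub, map_sub, ← hu]
  simp [T]

theorem coe_re_inner_self_apply {A : H →L[ℂ] H} (hsa : ∀ f g : H, ⟪A f, g⟫_ℂ = ⟪f, A g⟫_ℂ)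
    (x : H) : ((⟪x, A x⟫_ℂ).re : ℂ) = ⟪x, A x⟫_ℂ := by
  refine Complex.conj_eq_iff_re.mp ?_
  rw [inner_conj_symm, hsa]

theorem nonneg_of_coercive {A : H →L[ℂ] H} (hsa : ∀ f g : H, ⟪A f, g⟫_ℂ = ⟪f, A g⟫_ℂ)
    {lam : ℝ} (hlam : 0 < lam) (hcoer : ∀ x, lam * ‖x‖ ^ 2 ≤ (⟪x, A x⟫_ℂ).re) : 0 ≤ A := by
  rw [ContinuousLinearMap.nonneg_iff_isPositive, ContinuousLinearMap.isPositive_iff_complex]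
  intro x
  rw [hsa]
  exact ⟨coe_re_inner_self_apply hsa x, (by positivity : 0 ≤ lam * ‖x‖ ^ 2).trans (hcoer x)⟩

theorem inner_sub_sub_eq_one {e : H} {V₁ V₂ : Submodule ℂ H} (hee : ⟪e, e⟫_ℂ = 1)
    (he : e ∈ V₁ᗮ) (hV₂ : V₂ ≤ (ℂ ∙ e ⊔ V₁)ᗮ) {f g : H} (hf : f ∈ V₁) (hg : g ∈ V₂) :
    ⟪e - f, e - g⟫_ℂ = 1 := by
  obtain ⟨hge, hgV₁⟩ : g ∈ (ℂ ∙ e)ᗮ ∧ g ∈ V₁ᗮ := by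
    rw [← Submodule.mem_inf, Submodule.inf_orthogonal]; exact hV₂ hg
  rw [inner_sub_left, inner_sub_right, inner_sub_right, hee,
    Submodule.mem_orthogonal_singleton_iff_inner_right.mp hge,
    Submodule.inner_right_of_mem_orthogonal hf he, Submodule.inner_right_of_mem_orthogonal hf hgV₁]
  ring

variable [CompleteSpace H]

theorem inner_sqrt_apply_sqrt_apply {A : H →L[ℂ] H} (hA : 0 ≤ A) (x y : H) :
    ⟪CFC.sqrt A x, CFC.sqrt A y⟫_ℂ = ⟪x, A y⟫_ℂ := by
  have hS : IsSelfAdjoint (CFC.sqrt A) := (CFC.sqrt_nonneg A).isSelfAdjoint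
  rw [← ContinuousLinearMap.adjoint_inner_right, hS.adjoint_eq, ← mul_apply_eq_comp,
    CFC.sqrt_mul_sqrt_self A hA]

theorem one_le_re_inner_mul_re_inner {A B : H →L[ℂ] H} (hA : 0 ≤ A) {x y : H}
    (hAB : A (B y) = y) (hxy : ⟪x, y⟫_ℂ = 1) :
    1 ≤ (⟪x, A x⟫_ℂ).re * (⟪y, B y⟫_ℂ).re := by
  set S := CFC.sqrt A
  have hnorm_sq (z : H) : ‖S z‖ ^ 2 = (⟪z, A z⟫_ℂ).re := by
    rw [← inner_sqrt_apply_sqrt_apply hA, inner_self_eq_norm_sq_to_K]; norm_cast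
  have hcs : 1 ≤ ‖S x‖ * ‖S (B y)‖ :=
    calc (1 : ℝ) = ‖⟪x, A (B y)⟫_ℂ‖ := by rw [hAB, hxy, norm_one]
      _ = ‖⟪S x, S (B y)⟫_ℂ‖ := by rw [inner_sqrt_apply_sqrt_apply hA]
      _ ≤ ‖S x‖ * ‖S (B y)‖ := norm_inner_le_norm _ _
  have hBy : (⟪y, B y⟫_ℂ).re = ‖S (B y)‖ ^ 2 := by
    rw [hnorm_sq, hAB, ← inner_conj_symm, Complex.conj_re]
  rw [← hnorm_sq x, hBy, ← mul_pow]
  exact one_le_pow₀ hcs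

section Duality

variable {A B : H →L[ℂ] H} {e : H} {V₁ V₂ : Submodule ℂ H}

theorem exists_re_inner_eq_and_re_inner_eq_inv (hsa : ∀ f g : H, ⟪A f, g⟫_ℂ = ⟪f, A g⟫_ℂ)
    {lam : ℝ} (hlam : 0 < lam) (hcoer : ∀ x, lam * ‖x‖ ^ 2 ≤ (⟪x, A x⟫_ℂ).re)
    (hBA : ∀ f, B (A f) = f) (hee : ⟪e, e⟫_ℂ = 1) (he : e ∈ V₁ᗮ)
    (hV₂ : (ℂ ∙ e ⊔ V₁)ᗮ ≤ V₂.topologicalClosure) :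
    ∃ a : ℝ, 0 < a ∧ (∃ u ∈ V₁.topologicalClosure, (⟪e - u, A (e - u)⟫_ℂ).re = a) ∧
      ∃ g ∈ V₂.topologicalClosure, (⟪e - g, B (e - g)⟫_ℂ).re = a⁻¹ := by
  obtain ⟨u, hu, hAx⟩ := exists_mem_apply_sub_mem_orthogonal hlam hcoer V₁.topologicalClosure e
  set x := e - u
  have hex : ⟪e, x⟫_ℂ = 1 := by
    rw [inner_sub_right, hee, Submodule.inner_left_of_mem_orthogonal hu
      (by rwa [Submodule.orthogonal_closure]), sub_zero]
  have hxAx : ⟪x, A x⟫_ℂ = ⟪e, A x⟫_ℂ := by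
    rw [inner_sub_left, Submodule.inner_right_of_mem_orthogonal hu hAx, sub_zero]
  set a := (⟪x, A x⟫_ℂ).re
  have ha : ⟪x, A x⟫_ℂ = a := (coe_re_inner_self_apply hsa x).symm
  have hx : x ≠ 0 := by rintro hx; simp [hx] at hex
  have hapos : 0 < a := (by positivity : 0 < lam * ‖x‖ ^ 2).trans_le (hcoer x)
  have hac : (a : ℂ) ≠ 0 := by exact_mod_cast hapos.ne'
  rw [Submodule.orthogonal_closure] at hAx
  refine ⟨a, hapos, ⟨u, hu, rfl⟩, e - (a⁻¹ : ℂ) • A x, hV₂ ?_, ?_⟩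
  · rw [← Submodule.inf_orthogonal]
    refine ⟨Submodule.mem_orthogonal_singleton_iff_inner_right.mpr ?_,
      sub_mem he (Submodule.smul_mem _ _ hAx)⟩
    rw [inner_sub_right, inner_smul_right, hee, ← hxAx, ha, inv_mul_cancel₀ hac, sub_self]
  · rw [sub_sub_cancel, map_smul, hBA, inner_smul_left, inner_smul_right, hsa, ha,
      map_inv₀, Complex.conj_ofReal, inv_mul_cancel₀ hac, mul_one, ← Complex.ofReal_inv,
      Complex.ofReal_re]

theorem sInf_mul_sInf_eq_one (hsa : ∀ f g : H, ⟪A f, g⟫_ℂ = ⟪f, A g⟫_ℂ)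
    {lam : ℝ} (hlam : 0 < lam) (hcoer : ∀ x, lam * ‖x‖ ^ 2 ≤ (⟪x, A x⟫_ℂ).re)
    (hAB : ∀ f, A (B f) = f) (hBA : ∀ f, B (A f) = f) (hee : ⟪e, e⟫_ℂ = 1) (he : e ∈ V₁ᗮ)
    (hV₂ : V₂.topologicalClosure = (ℂ ∙ e ⊔ V₁)ᗮ) :
    sInf ((fun f => (⟪e - f, A (e - f)⟫_ℂ).re) '' V₁) *
      sInf ((fun g => (⟪e - g, B (e - g)⟫_ℂ).re) '' V₂) = 1 := by
  set Φ := fun f => (⟪e - f, A (e - f)⟫_ℂ).re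
  set Ψ := fun g => (⟪e - g, B (e - g)⟫_ℂ).re
  have hA := nonneg_of_coercive hsa hlam hcoer
  have hA₀ (z : H) : 0 ≤ (⟪z, A z⟫_ℂ).re :=
    ((ContinuousLinearMap.nonneg_iff_isPositive A).mp hA).re_inner_nonneg_right z
  have hΨ₀ (g : H) : 0 ≤ Ψ g := by
    have : ⟪e - g, B (e - g)⟫_ℂ = ⟪B (e - g), A (B (e - g))⟫_ℂ := by rw [← hsa, hAB]
    simp only [Ψ, this, hA₀]
  refine le_antisymm ?_ ?_
  · obtain ⟨a, ha, ⟨u, hu, hΦu⟩, g, hg, hΨg⟩ :=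
      exists_re_inner_eq_and_re_inner_eq_inv hsa hlam hcoer hBA hee he hV₂.ge
    calc sInf (Φ '' V₁) * sInf (Ψ '' V₂) ≤ Φ u * Ψ g :=
          mul_le_mul (csInf_image_le_of_mem_closure (by fun_prop) ⟨0, by
              rintro _ ⟨f, -, rfl⟩; exact hA₀ _⟩ hu)
            (csInf_image_le_of_mem_closure (by fun_prop) ⟨0, by
              rintro _ ⟨f, -, rfl⟩; exact hΨ₀ _⟩ hg)
            (Real.sInf_nonneg (by rintro _ ⟨f, -, rfl⟩; exact hΨ₀ _)) (hA₀ _)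
      _ = 1 := by simp only [Φ, Ψ, hΦu, hΨg, mul_inv_cancel₀ ha.ne']
  · refine one_le_sInf_mul_sInf ⟨_, 0, V₁.zero_mem, rfl⟩ ⟨_, 0, V₂.zero_mem, rfl⟩
      (by rintro _ ⟨g, -, rfl⟩; exact hΨ₀ g) ?_
    rintro _ ⟨f, hf, rfl⟩ _ ⟨g, hg, rfl⟩
    exact one_le_re_inner_mul_re_inner hA (hAB _)
      (inner_sub_sub_eq_one hee he (hV₂ ▸ V₂.le_topologicalClosure) hf hg)

end Duality

end Hilbert

section l2

variable {E : Type*} [DecidableEq E]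

theorem inner_evec_left (x : E) (f : lp (fun _ : E => ℂ) 2) : ⟪evec x, f⟫_ℂ = f x := by
  simp [evec, lp.inner_single_left]

theorem evec_apply_of_ne {x z : E} (h : z ≠ x) : evec x z = 0 :=
  lp.single_apply_ne 2 x 1 h

theorem mem_orthogonal_span_evec_iff {S : Set E} {f : lp (fun _ : E => ℂ) 2} :
    f ∈ (Submodule.span ℂ (evec '' S))ᗮ ↔ ∀ z ∈ S, f z = 0 := by
  rw [← Submodule.span_singleton_le_iff_mem, ← Submodule.isOrtho_iff_le, Submodule.isOrtho_comm,
    Submodule.isOrtho_span]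
  simp [inner_evec_left]

theorem topologicalClosure_span_evec (S : Set E) :
    (Submodule.span ℂ (evec '' S)).topologicalClosure = (Submodule.span ℂ (evec '' Sᶜ))ᗮ := by
  refine le_antisymm (Submodule.topologicalClosure_minimal _ ?_ (Submodule.isClosed_orthogonal _))
    ?_
  · rw [Submodule.span_le]
    rintro _ ⟨y, hy, rfl⟩
    exact mem_orthogonal_span_evec_iff.mpr fun z hz =>
      evec_apply_of_ne (ne_of_mem_of_not_mem hy hz).symm
  · rw [← Submodule.orthogonal_orthogonal_eq_closure]
    intro f hf
    rw [Submodule.mem_orthogonal]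
    intro g hg
    rw [lp.inner_eq_tsum]
    refine (tsum_congr fun i => ?_).trans tsum_zero
    by_cases hi : i ∈ S
    · simp [mem_orthogonal_span_evec_iff.mp hg i hi]
    · simp [mem_orthogonal_span_evec_iff.mp hf i hi]

end l2

theorem statement2_general {E : Type*} [DecidableEq E]
    (A B : lp (fun _ : E => ℂ) 2 →L[ℂ] lp (fun _ : E => ℂ) 2)
    (hsa : ∀ f g : lp (fun _ : E => ℂ) 2, (inner ℂ (A f) g : ℂ) = inner ℂ f (A g))
    (lam : ℝ) (hlam : 0 < lam)
    (hcoer : ∀ f : lp (fun _ : E => ℂ) 2, lam * ‖f‖ ^ 2 ≤ (inner ℂ f (A f) : ℂ).re)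
    (hAB : ∀ f, A (B f) = f) (hBA : ∀ f, B (A f) = f)
    (x₀ : E) (R₁ R₂ : Set E)
    (hx₁ : x₀ ∉ R₁) (hx₂ : x₀ ∉ R₂) (hdisj : Disjoint R₁ R₂)
    (hcover : insert x₀ (R₁ ∪ R₂) = (Set.univ : Set E)) :
    sInf ((fun f => (inner ℂ (evec x₀ - f) (A (evec x₀ - f)) : ℂ).re) ''
        (Submodule.span ℂ (evec '' R₁) : Set (lp (fun _ : E => ℂ) 2))) *
      sInf ((fun g => (inner ℂ (evec x₀ - g) (B (evec x₀ - g)) : ℂ).re) ''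
        (Submodule.span ℂ (evec '' R₂) : Set (lp (fun _ : E => ℂ) 2))) = 1 := by
  have hcompl : R₂ᶜ = insert x₀ R₁ := by
    ext z
    have hz : z ∈ insert x₀ (R₁ ∪ R₂) := hcover ▸ Set.mem_univ z
    constructor
    · intro hz₂
      rcases hz with rfl | hz₁ | hz₂R
      exacts [Or.inl rfl, Or.inr hz₁, absurd hz₂R hz₂]
    · rintro (rfl | hz₁)
      exacts [hx₂, Set.disjoint_left.mp hdisj hz₁]
  refine sInf_mul_sInf_eq_one hsa hlam hcoer hAB hBA ?_ ?_ ?_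
  · rw [inner_evec_left, evec, lp.single_apply_self]
  · exact mem_orthogonal_span_evec_iff.mpr fun z hz =>
      evec_apply_of_ne (ne_of_mem_of_not_mem hz hx₁)
  · rw [topologicalClosure_span_evec, hcompl, Set.image_insert_eq, Submodule.span_insert]

/-- **The variational duality `α·β = 1`.**
Let `A` be a bounded self-adjoint operator on `l²(E)`, positive and boundedly invertible
(with inverse `B` and coercivity constant `λ > 0`).  Let `E = {x₀} ∪ R₁ ∪ R₂` be a
partition.  With
`α = inf {⟨e_{x₀} − f, A(e_{x₀} − f)⟩ : f ∈ span {e_y : y ∈ R₁}}` and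
`β = inf {⟨e_{x₀} − g, A⁻¹(e_{x₀} − g)⟩ : g ∈ span {e_y : y ∈ R₂}}`, one has `α·β = 1`. -/
theorem statement2 {E : Type*} [Countable E] [DecidableEq E]
    (A B : lp (fun _ : E => ℂ) 2 →L[ℂ] lp (fun _ : E => ℂ) 2)
    (hsa : ∀ f g : lp (fun _ : E => ℂ) 2, (inner ℂ (A f) g : ℂ) = inner ℂ f (A g))
    (lam : ℝ) (hlam : 0 < lam)
    (hcoer : ∀ f : lp (fun _ : E => ℂ) 2, lam * ‖f‖ ^ 2 ≤ (inner ℂ f (A f) : ℂ).re)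
    (hAB : ∀ f, A (B f) = f) (hBA : ∀ f, B (A f) = f)
    (x₀ : E) (R₁ R₂ : Set E)
    (hx₁ : x₀ ∉ R₁) (hx₂ : x₀ ∉ R₂) (hdisj : Disjoint R₁ R₂)
    (hcover : insert x₀ (R₁ ∪ R₂) = (Set.univ : Set E)) :
    sInf ((fun f => (inner ℂ (evec x₀ - f) (A (evec x₀ - f)) : ℂ).re) ''
        (Submodule.span ℂ (evec '' R₁) : Set (lp (fun _ : E => ℂ) 2))) *
      sInf ((fun g => (inner ℂ (evec x₀ - g) (B (evec x₀ - g)) : ℂ).re) ''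
        (Submodule.span ℂ (evec '' R₂) : Set (lp (fun _ : E => ℂ) 2))) = 1 :=
  statement2_general A B hsa lam hlam hcoer hAB hBA x₀ R₁ R₂ hx₁ hx₂ hdisj hcover
end

section
/- Let μ be a probability measure on X = {0,1}^E having Papangelou intensity α, i.e. for every measurable h : E × X → [0,∞], ∫ Σ_{x∈ξ} h(x, ξ∖{x}) μ(dξ) = ∫ Σ_{x∈E∖ξ} α(x;ξ) h(x, ξ) μ(dξ) (values in [0,∞]). Let b, d : E × X → [0,∞) be bounded measurable birth and death rates satisfying the detailed balance relation b(x;ξ) = α(x;ξ) · d(x; ξ∪{x}) for all x ∈ E and all ξ ∈ X with x ∉ ξ. Then the Glauber pregenerator L^G is symmetric with respect to μ: for all f, g ∈ D(X), ∫ f(ξ) L^G g(ξ) μ(dξ) = ∫ L^G f(ξ) g(ξ) μ(dξ). -/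
/-!
Fix a site `x`. The GNZ identity, tested on functions supported at `x`, says that the measure
`d(x;ξ) μ(dξ)` on `{x ∈ ξ}`, pushed forward by `ξ ↦ ξ ∖ {x}`, equals `α(x;ξ) d(x;ξ ∪ {x}) μ(dξ)`
on `{x ∉ ξ}`, which by detailed balance is `b(x;ξ) μ(dξ)`. Moving the death part of
`∫ f · L^G g dμ` at `x` across this identity turns it into a birth term, and the two birth terms
at `x` add up to `-∫_{x ∉ ξ} b(x;ξ) (f(ξ ∪ {x}) - f(ξ)) (g(ξ ∪ {x}) - g(ξ)) μ(dξ)`, which is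
symmetric in `f` and `g`. Summing over `x` is justified by `|f · L^G_x g| ≤ ‖f‖ C Δ_g(x)`.
-/

open MeasureTheory
open scoped ENNReal

/-- The Glauber pregenerator with death rates `d` and birth rates `b`:
`L^G f(ξ) = Σ_{x∈ξ} d(x;ξ)[f(ξ∖{x}) − f(ξ)] + Σ_{y∉ξ} b(y;ξ)[f(ξ∪{y}) − f(ξ)]`. -/
noncomputable def glauberGen {E : Type*} [DecidableEq E]
    (b d : E → (E → Bool) → ℝ) (f : (E → Bool) → ℝ) (ξ : E → Bool) : ℝ :=
  ∑' x : E,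
    (if ξ x = true then d x ξ * (f (Function.update ξ x false) - f ξ)
     else b x ξ * (f (Function.update ξ x true) - f ξ))

open Function

theorem integrable_mul_of_continuous {X : Type*} [TopologicalSpace X] [CompactSpace X]
    [MeasurableSpace X] [OpensMeasurableSpace X] {μ : Measure X} [IsFiniteMeasure μ]
    {r F : X → ℝ} {C : ℝ} (hr : Measurable r) (hrC : ∀ a, |r a| ≤ C) (hF : Continuous F) :
    Integrable (fun a => r a * F a) μ :=
  (hF.integrable_of_hasCompactSupport (.of_compactSpace F)).bdd_mul hr.aestronglyMeasurable
    (ae_of_all _ hrC)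

section Glauber

variable {E : Type*}

theorem measurableSet_setOf_apply_eq (x : E) (v : Bool) :
    MeasurableSet {ξ : E → Bool | ξ x = v} :=
  measurableSet_eq_fun (measurable_pi_apply x) measurable_const

variable [DecidableEq E]

theorem update_update_false_true {ξ : E → Bool} {x : E} (hx : ξ x = true) :
    update (update ξ x false) x true = ξ := by
  rw [update_idem, ← hx, update_eq_self]

/-- The Georgii–Nguyen–Zessin identity; a configuration is its indicator `ξ : E → Bool`, so
`update ξ x false` is `ξ ∖ {x}`. -/
def HasPapangelouIntensity (μ : Measure (E → Bool)) (α : E → (E → Bool) → ℝ) : Prop :=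
  ∀ h : E → (E → Bool) → ℝ≥0∞, (∀ x, Measurable (h x)) →
    (∫⁻ ξ, ∑' x : E, (if ξ x = true then h x (update ξ x false) else 0) ∂μ) =
    ∫⁻ ξ, ∑' x : E, (if ξ x = false then ENNReal.ofReal (α x ξ) * h x ξ else 0) ∂μ

def glauberTerm (b d : E → (E → Bool) → ℝ) (f : (E → Bool) → ℝ) (x : E) (ξ : E → Bool) : ℝ :=
  if ξ x = true then d x ξ * (f (update ξ x false) - f ξ)
  else b x ξ * (f (update ξ x true) - f ξ)

noncomputable def siteOscillation (f : (E → Bool) → ℝ) (x : E) : ℝ :=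
  ⨆ ξ : E → Bool, |f (update ξ x true) - f ξ|

section Oscillation

variable {f : (E → Bool) → ℝ} (hf : Continuous f) (x : E)
include hf

theorem abs_sub_le_siteOscillation (ξ : E → Bool) :
    |f (update ξ x true) - f ξ| ≤ siteOscillation f x := by
  have hcont : Continuous fun ξ : E → Bool => |f (update ξ x true) - f ξ| := by fun_prop
  exact le_ciSup (isCompact_range hcont).bddAbove ξ

theorem abs_update_false_sub_le_siteOscillation {ξ : E → Bool} (hξ : ξ x = true) :
    |f (update ξ x false) - f ξ| ≤ siteOscillation f x := by
  simpa only [update_update_false_true hξ, abs_sub_comm] using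
    abs_sub_le_siteOscillation hf x (update ξ x false)

end Oscillation

variable {b d : E → (E → Bool) → ℝ} {C : ℝ}

theorem abs_glauberTerm_le (hb0 : ∀ x ξ, 0 ≤ b x ξ) (hd0 : ∀ x ξ, 0 ≤ d x ξ)
    (hbC : ∀ x ξ, b x ξ ≤ C) (hdC : ∀ x ξ, d x ξ ≤ C) {f : (E → Bool) → ℝ} (hf : Continuous f)
    (x : E) (ξ : E → Bool) : |glauberTerm b d f x ξ| ≤ C * siteOscillation f x := by
  unfold glauberTerm
  split_ifs with hξ
  · rw [abs_mul, abs_of_nonneg (hd0 x ξ)]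
    exact mul_le_mul (hdC x ξ) (abs_update_false_sub_le_siteOscillation hf x hξ)
      (abs_nonneg _) ((hd0 x ξ).trans (hdC x ξ))
  · rw [abs_mul, abs_of_nonneg (hb0 x ξ)]
    exact mul_le_mul (hbC x ξ) (abs_sub_le_siteOscillation hf x ξ)
      (abs_nonneg _) ((hb0 x ξ).trans (hbC x ξ))

theorem measurable_glauberTerm [Countable E] (hbmeas : ∀ x, Measurable (b x))
    (hdmeas : ∀ x, Measurable (d x)) {f : (E → Bool) → ℝ} (hf : Continuous f) (x : E) :
    Measurable (glauberTerm b d f x) :=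
  have hfm := hf.measurable
  Measurable.ite (measurableSet_setOf_apply_eq x true)
    ((hdmeas x).mul ((hfm.comp measurable_update_left).sub hfm))
    ((hbmeas x).mul ((hfm.comp measurable_update_left).sub hfm))

namespace HasPapangelouIntensity

variable {μ : Measure (E → Bool)} {α : E → (E → Bool) → ℝ}

theorem setLIntegral_update_false (hα : HasPapangelouIntensity μ α) (x : E)
    {h : (E → Bool) → ℝ≥0∞} (hh : Measurable h) :
    ∫⁻ ξ in {ξ | ξ x = true}, h (update ξ x false) ∂μ =
      ∫⁻ ξ in {ξ | ξ x = false}, ENNReal.ofReal (α x ξ) * h ξ ∂μ := by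
  have key := hα (fun y => if y = x then h else 0) fun y => by
    split_ifs
    exacts [hh, measurable_const]
  simp only [Pi.zero_apply, ite_apply] at key
  rw [lintegral_congr fun ξ => tsum_eq_single x fun y hy => by simp [hy],
    lintegral_congr fun ξ => tsum_eq_single x fun y hy => by simp [hy]] at key
  simp only [if_true] at key
  rw [← lintegral_indicator (measurableSet_setOf_apply_eq x true),
    ← lintegral_indicator (measurableSet_setOf_apply_eq x false)]
  simpa only [Set.indicator_apply, Set.mem_ofPred_eq] using key

variable (hα : HasPapangelouIntensity μ α) (hα0 : ∀ x ξ, 0 ≤ α x ξ)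
  (hbmeas : ∀ x, Measurable (b x)) (hdmeas : ∀ x, Measurable (d x))
  (hdb : ∀ x ξ, ξ x = false → b x ξ = α x ξ * d x (update ξ x true))
include hα hα0 hbmeas hdmeas hdb

theorem map_withDensity_death_eq_withDensity_birth (x : E) :
    ((μ.restrict {ξ | ξ x = true}).withDensity fun ξ => ENNReal.ofReal (d x ξ)).map
        (update · x false) =
      (μ.restrict {ξ | ξ x = false}).withDensity fun ξ => ENNReal.ofReal (b x ξ) := by
  refine Measure.ext_of_lintegral _ fun h hh => ?_
  rw [lintegral_map hh measurable_update_left,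
    lintegral_withDensity_eq_lintegral_mul _ (hdmeas x).ennreal_ofReal
      (g := fun ξ => h (update ξ x false)) (hh.comp measurable_update_left),
    lintegral_withDensity_eq_lintegral_mul _ (hbmeas x).ennreal_ofReal hh]
  calc ∫⁻ ξ in {ξ | ξ x = true}, ENNReal.ofReal (d x ξ) * h (update ξ x false) ∂μ
      = ∫⁻ ξ in {ξ | ξ x = true},
          ENNReal.ofReal (d x (update (update ξ x false) x true)) * h (update ξ x false) ∂μ :=
        setLIntegral_congr_fun (measurableSet_setOf_apply_eq x true) fun ξ hξ => by
          rw [update_update_false_true hξ]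
    _ = ∫⁻ ξ in {ξ | ξ x = false},
          ENNReal.ofReal (α x ξ) * (ENNReal.ofReal (d x (update ξ x true)) * h ξ) ∂μ :=
        hα.setLIntegral_update_false x
          ((hdmeas x).comp measurable_update_left |>.ennreal_ofReal.mul hh)
    _ = ∫⁻ ξ in {ξ | ξ x = false}, ENNReal.ofReal (b x ξ) * h ξ ∂μ :=
        setLIntegral_congr_fun (measurableSet_setOf_apply_eq x false) fun ξ hξ => by
          rw [← mul_assoc, ← ENNReal.ofReal_mul (hα0 x ξ), ← hdb x ξ hξ]

variable (hb0 : ∀ x ξ, 0 ≤ b x ξ) (hd0 : ∀ x ξ, 0 ≤ d x ξ)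
include hb0 hd0

theorem setIntegral_death_eq_setIntegral_birth (x : E) {φ : (E → Bool) → ℝ} (hφ : Measurable φ) :
    ∫ ξ in {ξ | ξ x = true}, d x ξ * φ (update ξ x false) ∂μ =
      ∫ ξ in {ξ | ξ x = false}, b x ξ * φ ξ ∂μ := by
  have key := congrArg (fun ν => ∫ ξ, φ ξ ∂ν)
    (hα.map_withDensity_death_eq_withDensity_birth hα0 hbmeas hdmeas hdb x)
  rw [integral_map measurable_update_left.aemeasurable hφ.aestronglyMeasurable,
    integral_withDensity_eq_integral_toReal_smul (hdmeas x).ennreal_ofReal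
      (ae_of_all _ fun _ => ENNReal.ofReal_lt_top),
    integral_withDensity_eq_integral_toReal_smul (hbmeas x).ennreal_ofReal
      (ae_of_all _ fun _ => ENNReal.ofReal_lt_top)] at key
  simpa only [ENNReal.toReal_ofReal (hd0 _ _), ENNReal.toReal_ofReal (hb0 _ _), smul_eq_mul]
    using key

variable [Countable E] [IsFiniteMeasure μ] (hbC : ∀ x ξ, b x ξ ≤ C) (hdC : ∀ x ξ, d x ξ ≤ C)
  {f g : (E → Bool) → ℝ} (hf : Continuous f) (hg : Continuous g)
include hbC hdC hf hg

theorem integral_mul_glauberTerm (x : E) :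
    ∫ ξ, f ξ * glauberTerm b d g x ξ ∂μ =
      -∫ ξ in {ξ | ξ x = false},
        b x ξ * ((f (update ξ x true) - f ξ) * (g (update ξ x true) - g ξ)) ∂μ := by
  set S : Set (E → Bool) := {ξ | ξ x = true}
  have hS : MeasurableSet S := measurableSet_setOf_apply_eq x true
  have hSc : Sᶜ = {ξ | ξ x = false} := by ext; simp [S]
  have hbabs : ∀ ξ, |b x ξ| ≤ C := fun ξ => (abs_of_nonneg (hb0 x ξ)).trans_le (hbC x ξ)
  have hdabs : ∀ ξ, |d x ξ| ≤ C := fun ξ => (abs_of_nonneg (hd0 x ξ)).trans_le (hdC x ξ)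
  set φ : (E → Bool) → ℝ := fun η => f (update η x true) * (g η - g (update η x true))
  have hφ : Continuous φ := by fun_prop
  have hsplit : (fun ξ => f ξ * glauberTerm b d g x ξ) = S.piecewise
      (fun ξ => d x ξ * (f ξ * (g (update ξ x false) - g ξ)))
      (fun ξ => b x ξ * (f ξ * (g (update ξ x true) - g ξ))) := by
    ext ξ
    by_cases hξ : ξ x = true <;>
      simp only [glauberTerm, Set.piecewise, Set.mem_ofPred_eq, S, hξ, Bool.false_eq_true,
        ↓reduceIte] <;>
      ring
  have hdeath : ∫ ξ in S, d x ξ * (f ξ * (g (update ξ x false) - g ξ)) ∂μ =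
      ∫ ξ in {ξ | ξ x = false}, b x ξ * φ ξ ∂μ := by
    rw [← hα.setIntegral_death_eq_setIntegral_birth hα0 hbmeas hdmeas hdb hb0 hd0 x
      hφ.measurable]
    refine setIntegral_congr_fun hS fun ξ hξ => ?_
    simp only [φ, update_update_false_true hξ]
  rw [hsplit, integral_piecewise hS
      (integrable_mul_of_continuous (hdmeas x) hdabs (by fun_prop)).integrableOn
      (integrable_mul_of_continuous (hbmeas x) hbabs (by fun_prop)).integrableOn,
    hdeath, hSc, ← integral_add (integrable_mul_of_continuous (hbmeas x) hbabs hφ).integrableOn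
      (integrable_mul_of_continuous (hbmeas x) hbabs (by fun_prop)).integrableOn,
    ← integral_neg]
  congr 1
  ext ξ
  ring

theorem integral_mul_glauberGen (hgD : Summable (siteOscillation g)) :
    ∫ ξ, f ξ * glauberGen b d g ξ ∂μ =
      ∑' x, -∫ ξ in {ξ | ξ x = false},
        b x ξ * ((f (update ξ x true) - f ξ) * (g (update ξ x true) - g ξ)) ∂μ := by
  obtain ⟨M, hM⟩ := (isCompact_range hf).isBounded.exists_norm_le
  have hbound : ∀ x ξ, ‖f ξ * glauberTerm b d g x ξ‖ ≤ M * (C * siteOscillation g x) := by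
    intro x ξ
    rw [norm_mul]
    exact mul_le_mul (hM _ ⟨ξ, rfl⟩) (abs_glauberTerm_le hb0 hd0 hbC hdC hg x ξ)
      (norm_nonneg _) ((norm_nonneg _).trans (hM _ ⟨ξ, rfl⟩))
  have hint : ∀ x, Integrable (fun ξ => f ξ * glauberTerm b d g x ξ) μ := fun x =>
    .of_bound (hf.measurable.mul (measurable_glauberTerm hbmeas hdmeas hg x)).aestronglyMeasurable
      _ (ae_of_all _ (hbound x))
  have hsum : Summable fun x => ∫ ξ, ‖f ξ * glauberTerm b d g x ξ‖ ∂μ := by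
    refine .of_nonneg_of_le (fun x => integral_nonneg fun ξ => norm_nonneg _)
      (fun x => ?_) ((hgD.mul_left (M * C)).mul_right (μ.real Set.univ))
    rw [mul_assoc M]
    exact (Real.le_norm_self _).trans
      (norm_integral_le_of_norm_le_const (ae_of_all _ fun ξ => by simpa using hbound x ξ))
  simp_rw [← hα.integral_mul_glauberTerm hα0 hbmeas hdmeas hdb hb0 hd0 hbC hdC hf hg]
  rw [integral_tsum_of_summable_integral_norm hint hsum]
  simp only [glauberGen, glauberTerm, tsum_mul_left]

end HasPapangelouIntensity

end Glauber

theorem statement6_general {E : Type*} [Countable E] [DecidableEq E]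
    (μ : Measure (E → Bool)) [IsProbabilityMeasure μ]
    (α : E → (E → Bool) → ℝ)
    (hα0 : ∀ x ξ, 0 ≤ α x ξ)
    (hPap : ∀ h : E → (E → Bool) → ℝ≥0∞, (∀ x, Measurable (h x)) →
      (∫⁻ ξ, ∑' x : E,
          (if ξ x = true then h x (Function.update ξ x false) else 0) ∂μ) =
      ∫⁻ ξ, ∑' x : E,
          (if ξ x = false then ENNReal.ofReal (α x ξ) * h x ξ else 0) ∂μ)
    (b d : E → (E → Bool) → ℝ)
    (hb0 : ∀ x ξ, 0 ≤ b x ξ) (hd0 : ∀ x ξ, 0 ≤ d x ξ)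
    (hbmeas : ∀ x, Measurable (b x)) (hdmeas : ∀ x, Measurable (d x))
    (C : ℝ) (hbC : ∀ x ξ, b x ξ ≤ C) (hdC : ∀ x ξ, d x ξ ≤ C)
    (hdb : ∀ x ξ, ξ x = false → b x ξ = α x ξ * d x (Function.update ξ x true))
    (f g : (E → Bool) → ℝ) (hf : Continuous f) (hg : Continuous g)
    (hfD : Summable fun x : E => ⨆ ξ : E → Bool, |f (Function.update ξ x true) - f ξ|)
    (hgD : Summable fun x : E => ⨆ ξ : E → Bool, |g (Function.update ξ x true) - g ξ|) :
    (∫ ξ, f ξ * glauberGen b d g ξ ∂μ) = ∫ ξ, glauberGen b d f ξ * g ξ ∂μ := by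
  have hα : HasPapangelouIntensity μ α := hPap
  rw [hα.integral_mul_glauberGen hα0 hbmeas hdmeas hdb hb0 hd0 hbC hdC hf hg hgD]
  simp_rw [mul_comm (glauberGen b d f _) (g _)]
  rw [hα.integral_mul_glauberGen hα0 hbmeas hdmeas hdb hb0 hd0 hbC hdC hg hf hfD]
  simp_rw [mul_comm (g (update _ _ true) - g _)]

/-- **Detailed balance implies symmetry of the Glauber pregenerator.**
Let `μ` be a probability measure on `X = {0,1}^E` with Papangelou intensity `α`
(in the sense of the Georgii–Nguyen–Zessin identity), and let `b, d` be bounded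
measurable nonnegative birth/death rates with `b(x;ξ) = α(x;ξ)·d(x;ξ∪{x})` whenever
`x ∉ ξ`.  Then for all `f, g ∈ D(X)`,
`∫ f · L^G g dμ = ∫ L^G f · g dμ`. -/
theorem statement6 {E : Type*} [Countable E] [DecidableEq E]
    (μ : Measure (E → Bool)) [IsProbabilityMeasure μ]
    (α : E → (E → Bool) → ℝ)
    (hα0 : ∀ x ξ, 0 ≤ α x ξ) (hαmeas : ∀ x, Measurable (α x))
    (hPap : ∀ h : E → (E → Bool) → ℝ≥0∞, (∀ x, Measurable (h x)) →
      (∫⁻ ξ, ∑' x : E,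
          (if ξ x = true then h x (Function.update ξ x false) else 0) ∂μ) =
      ∫⁻ ξ, ∑' x : E,
          (if ξ x = false then ENNReal.ofReal (α x ξ) * h x ξ else 0) ∂μ)
    (b d : E → (E → Bool) → ℝ)
    (hb0 : ∀ x ξ, 0 ≤ b x ξ) (hd0 : ∀ x ξ, 0 ≤ d x ξ)
    (hbmeas : ∀ x, Measurable (b x)) (hdmeas : ∀ x, Measurable (d x))
    (C : ℝ) (hbC : ∀ x ξ, b x ξ ≤ C) (hdC : ∀ x ξ, d x ξ ≤ C)
    (hdb : ∀ x ξ, ξ x = false → b x ξ = α x ξ * d x (Function.update ξ x true))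
    (f g : (E → Bool) → ℝ) (hf : Continuous f) (hg : Continuous g)
    (hfD : Summable fun x : E => ⨆ ξ : E → Bool, |f (Function.update ξ x true) - f ξ|)
    (hgD : Summable fun x : E => ⨆ ξ : E → Bool, |g (Function.update ξ x true) - g ξ|) :
    (∫ ξ, f ξ * glauberGen b d g ξ ∂μ) = ∫ ξ, glauberGen b d f ξ * g ξ ∂μ :=
  statement6_general μ α hα0 hPap b d hb0 hd0 hbmeas hdmeas C hbC hdC hdb f g hf hg hfD hgD
end

section
/- Let μ be a probability measure on X = {0,1}^E having Papangelou intensity α, i.e. for every measurable h : E × X → [0,∞], ∫ Σ_{x∈ξ} h(x, ξ∖{x}) μ(dξ) = ∫ Σ_{x∈E∖ξ} α(x;ξ) h(x, ξ) μ(dξ). Let c : E × E × X → [0,∞) be measurable jump rates with c(x,y;ξ) = 0 unless x ∈ ξ and y ∉ ξ, satisfying c^K := sup_{x∈E} Σ_{y≠x} sup_{ξ: x,y∉ξ} max{c(x,y;ξ∪{x}), c(y,x;ξ∪{y})} < ∞ and the detailed balance relation α(x;ξ) c(x,y; ξ∪{x}) = α(y;ξ) c(y,x; ξ∪{y}) for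 all x ≠ y in E and all ξ ∈ X with x, y ∉ ξ. Then the Kawasaki pregenerator L^K is symmetric with respect to μ: for all f, g ∈ D(X), ∫ f(ξ) L^K g(ξ) μ(dξ) = ∫ L^K f(ξ) g(ξ) μ(dξ). -/
open MeasureTheory
open scoped ENNReal

private lemma summable_of_tsum_ofReal_ne_top {ι : Type*} {r : ι → ℝ}
    (h0 : ∀ i, 0 ≤ r i) (h : (∑' i, ENNReal.ofReal (r i)) ≠ ⊤) : Summable r :=
  (ENNReal.summable_toReal h).congr fun i => ENNReal.toReal_ofReal (h0 i)

private lemma tsum_nonneg_toReal {ι : Type*} {r : ι → ℝ}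
    (h0 : ∀ i, 0 ≤ r i) (hs : Summable r) :
    (∑' i, ENNReal.ofReal (r i)).toReal = ∑' i, r i := by
  rw [← ENNReal.ofReal_tsum_of_nonneg h0 hs, ENNReal.toReal_ofReal (tsum_nonneg h0)]

private lemma ofReal_eq_ofReal_max (s : ℝ) : ENNReal.ofReal s = ENNReal.ofReal (max s 0) := by
  rcases le_total s 0 with h | h
  · rw [max_eq_right h, ENNReal.ofReal_zero, ENNReal.ofReal_eq_zero.2 h]
  · rw [max_eq_left h]

private lemma tsum_signed_eq {ι : Type*} {r : ι → ℝ} (hs : Summable fun i => |r i|) :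
    ∑' i, r i = (∑' i, ENNReal.ofReal (r i)).toReal - (∑' i, ENNReal.ofReal (- r i)).toReal := by
  have hp : Summable fun i => max (r i) 0 :=
    hs.of_nonneg_of_le (fun i => le_max_right _ _) (fun i => max_le (le_abs_self _) (abs_nonneg _))
  have hn : Summable fun i => max (-(r i)) 0 :=
    hs.of_nonneg_of_le (fun i => le_max_right _ _)
      (fun i => max_le (abs_neg (r i) ▸ le_abs_self _) (abs_nonneg _))
  have e1 : (∑' i, ENNReal.ofReal (r i)).toReal = ∑' i, max (r i) 0 := by
    simp_rw [ofReal_eq_ofReal_max (r _)]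
    exact tsum_nonneg_toReal (fun i => le_max_right _ _) hp
  have e2 : (∑' i, ENNReal.ofReal (-(r i))).toReal = ∑' i, max (-(r i)) 0 := by
    simp_rw [ofReal_eq_ofReal_max (-(r _))]
    exact tsum_nonneg_toReal (fun i => le_max_right _ _) hn
  rw [e1, e2, ← Summable.tsum_sub hp hn]
  refine tsum_congr fun i => ?_
  rcases le_total (r i) 0 with h | h
  · rw [max_eq_right h, max_eq_left (neg_nonneg.2 h)]; ring
  · rw [max_eq_left h, max_eq_right (neg_nonpos.2 h)]; ring

private lemma measurable_tsum_real {X : Type*} [MeasurableSpace X] {ι : Type*} [Countable ι]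
    (q : ι → X → ℝ) (hmeas : ∀ i, Measurable (q i)) (b : ι → ℝ)
    (hb : ∀ i x, |q i x| ≤ b i) (hbs : Summable b) :
    Measurable fun x => ∑' i, q i x := by
  have habs : ∀ x, Summable fun i => |q i x| := fun x =>
    hbs.of_nonneg_of_le (fun i => abs_nonneg _) (fun i => hb i x)
  have : (fun x => ∑' i, q i x) =
      fun x => (∑' i, ENNReal.ofReal (q i x)).toReal - (∑' i, ENNReal.ofReal (-(q i x))).toReal :=
    funext fun x => tsum_signed_eq (habs x)
  rw [this]
  exact ((Measurable.ennreal_tsum fun i => (hmeas i).ennreal_ofReal).ennreal_toReal).sub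
    ((Measurable.ennreal_tsum fun i => (hmeas i).neg.ennreal_ofReal).ennreal_toReal)

private lemma summable_fiber_sums {β γ : Type*} {f : β × γ → ℝ} (hf : Summable f) :
    Summable fun b => ∑' c, f (b, c) :=
  (hf.hasSum.prod_fiberwise (fun b => (hf.prod_factor b).hasSum)).summable

private lemma integral_tsum_signed {X : Type*} [MeasurableSpace X] (μ : Measure X) {ι : Type*}
    [Countable ι] (u : ι → X → ℝ) (hmeas : ∀ i, Measurable (u i))
    (habs : ∀ᵐ x ∂μ, Summable fun i => |u i x|)
    (hfin : (∫⁻ x, ∑' i, ENNReal.ofReal |u i x| ∂μ) ≠ ⊤) :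
    ∫ x, (∑' i, u i x) ∂μ = (∫⁻ x, ∑' i, ENNReal.ofReal (u i x) ∂μ).toReal
        - (∫⁻ x, ∑' i, ENNReal.ofReal (-(u i x)) ∂μ).toReal := by
  have hmp : Measurable fun x => ∑' i, ENNReal.ofReal (u i x) :=
    Measurable.ennreal_tsum fun i => (hmeas i).ennreal_ofReal
  have hmn : Measurable fun x => ∑' i, ENNReal.ofReal (-(u i x)) :=
    Measurable.ennreal_tsum fun i => (hmeas i).neg.ennreal_ofReal
  have hlep : ∀ x, (∑' i, ENNReal.ofReal (u i x)) ≤ ∑' i, ENNReal.ofReal |u i x| := fun x =>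
    ENNReal.tsum_le_tsum fun i => ENNReal.ofReal_le_ofReal (le_abs_self _)
  have hlen : ∀ x, (∑' i, ENNReal.ofReal (-(u i x))) ≤ ∑' i, ENNReal.ofReal |u i x| := fun x =>
    ENNReal.tsum_le_tsum fun i => ENNReal.ofReal_le_ofReal (neg_le_abs _)
  have hfp : (∫⁻ x, ∑' i, ENNReal.ofReal (u i x) ∂μ) ≠ ⊤ :=
    ((lintegral_mono hlep).trans_lt hfin.lt_top).ne
  have hfn : (∫⁻ x, ∑' i, ENNReal.ofReal (-(u i x)) ∂μ) ≠ ⊤ :=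
    ((lintegral_mono hlen).trans_lt hfin.lt_top).ne
  have hae : ∀ᵐ x ∂μ, (∑' i, u i x) =
      (∑' i, ENNReal.ofReal (u i x)).toReal - (∑' i, ENNReal.ofReal (-(u i x))).toReal :=
    habs.mono fun x hx => tsum_signed_eq hx
  rw [integral_congr_ae hae, integral_sub
      (integrable_toReal_of_lintegral_ne_top hmp.aemeasurable hfp)
      (integrable_toReal_of_lintegral_ne_top hmn.aemeasurable hfn),
    integral_toReal hmp.aemeasurable (ae_lt_top hmp hfp),
    integral_toReal hmn.aemeasurable (ae_lt_top hmn hfn)]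

private lemma abs_tsum_le_of_abs_le {ι : Type*} {q : ι → ℝ} {b : ι → ℝ}
    (h : ∀ i, |q i| ≤ b i) (hb : Summable b) : |∑' i, q i| ≤ ∑' i, b i := by
  have habs : Summable fun i => |q i| :=
    hb.of_nonneg_of_le (fun i => abs_nonneg _) h
  calc |∑' i, q i| ≤ ∑' i, |q i| := by
        simpa [Real.norm_eq_abs] using
          norm_tsum_le_tsum_norm (f := q) (by simpa [Real.norm_eq_abs] using habs)
    _ ≤ ∑' i, b i := Summable.tsum_le_tsum h habs hb

private lemma gnz_signed {E : Type*} [Countable E] [DecidableEq E]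
    (μ : Measure (E → Bool)) [IsProbabilityMeasure μ]
    (α : E → (E → Bool) → ℝ) (hα0 : ∀ x ξ, 0 ≤ α x ξ) (hαmeas : ∀ x, Measurable (α x))
    (hPap : ∀ h : E → (E → Bool) → ℝ≥0∞, (∀ x, Measurable (h x)) →
      (∫⁻ ξ, ∑' x : E,
          (if ξ x = true then h x (Function.update ξ x false) else 0) ∂μ) =
      ∫⁻ ξ, ∑' x : E,
          (if ξ x = false then ENNReal.ofReal (α x ξ) * h x ξ else 0) ∂μ)
    (h : E → (E → Bool) → ℝ) (hmeas : ∀ x, Measurable (h x))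
    (H : E → ℝ) (hH : ∀ x ξ, |h x ξ| ≤ H x) (hHs : Summable H) :
    ∫ ξ, (∑' x, if ξ x = true then h x (Function.update ξ x false) else 0) ∂μ
      = ∫ ξ, (∑' x, if ξ x = false then α x ξ * h x ξ else 0) ∂μ := by
  classical
  have hH0 : ∀ x, 0 ≤ H x := fun x => (abs_nonneg _).trans (hH x (fun _ => false))
  set u : E → (E → Bool) → ℝ :=
    fun x ξ => if ξ x = true then h x (Function.update ξ x false) else 0 with hu
  set v : E → (E → Bool) → ℝ := fun x ξ => if ξ x = false then α x ξ * h x ξ else 0 with hv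
  have hsetT : ∀ x : E, MeasurableSet {ξ : E → Bool | ξ x = true} := fun x => by
    have : {ξ : E → Bool | ξ x = true} = (fun ξ : E → Bool => ξ x) ⁻¹' {true} := rfl
    rw [this]; exact measurable_pi_apply x (measurableSet_singleton true)
  have hsetF : ∀ x : E, MeasurableSet {ξ : E → Bool | ξ x = false} := fun x => by
    have : {ξ : E → Bool | ξ x = false} = (fun ξ : E → Bool => ξ x) ⁻¹' {false} := rfl
    rw [this]; exact measurable_pi_apply x (measurableSet_singleton false)
  have humeas : ∀ x, Measurable (u x) := fun x =>
    Measurable.ite (hsetT x) ((hmeas x).comp measurable_update_left) measurable_const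
  have hvmeas : ∀ x, Measurable (v x) := fun x =>
    Measurable.ite (hsetF x) ((hαmeas x).mul (hmeas x)) measurable_const
  -- pointwise rewriting of ofReal of the indicators
  have hru : ∀ x ξ, ENNReal.ofReal (u x ξ)
      = (if ξ x = true then ENNReal.ofReal (h x (Function.update ξ x false)) else 0) := by
    intro x ξ; by_cases hx : ξ x = true <;> simp [hu, hx]
  have hrnu : ∀ x ξ, ENNReal.ofReal (-(u x ξ))
      = (if ξ x = true then ENNReal.ofReal (-(h x (Function.update ξ x false))) else 0) := by
    intro x ξ; by_cases hx : ξ x = true <;> simp [hu, hx]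
  have hrau : ∀ x ξ, ENNReal.ofReal |u x ξ|
      = (if ξ x = true then ENNReal.ofReal (|h x (Function.update ξ x false)|) else 0) := by
    intro x ξ; by_cases hx : ξ x = true <;> simp [hu, hx]
  have hrv : ∀ x ξ, ENNReal.ofReal (v x ξ)
      = (if ξ x = false then ENNReal.ofReal (α x ξ) * ENNReal.ofReal (h x ξ) else 0) := by
    intro x ξ; by_cases hx : ξ x = false <;>
      simp [hv, hx, ENNReal.ofReal_mul (hα0 x ξ)]
  have hrnv : ∀ x ξ, ENNReal.ofReal (-(v x ξ))
      = (if ξ x = false then ENNReal.ofReal (α x ξ) * ENNReal.ofReal (-(h x ξ)) else 0) := by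
    intro x ξ; by_cases hx : ξ x = false <;>
      simp [hv, hx, ← ENNReal.ofReal_mul (hα0 x ξ), mul_neg]
  have hrav : ∀ x ξ, ENNReal.ofReal |v x ξ|
      = (if ξ x = false then ENNReal.ofReal (α x ξ) * ENNReal.ofReal (|h x ξ|) else 0) := by
    intro x ξ; by_cases hx : ξ x = false <;>
      simp [hv, hx, abs_mul, abs_of_nonneg (hα0 x ξ), ENNReal.ofReal_mul (hα0 x ξ)]
  -- the constant bound
  have hBound_ne : (∑' x : E, ENNReal.ofReal (H x)) ≠ ⊤ := by
    rw [← ENNReal.ofReal_tsum_of_nonneg hH0 hHs]; exact ENNReal.ofReal_ne_top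
  have hfinL : (∫⁻ ξ, ∑' x, ENNReal.ofReal |u x ξ| ∂μ) ≠ ⊤ := by
    have hb : ∀ ξ, (∑' x, ENNReal.ofReal |u x ξ|) ≤ ∑' x : E, ENNReal.ofReal (H x) := fun ξ =>
      ENNReal.tsum_le_tsum fun x => by
        rw [hrau]
        by_cases hx : ξ x = true <;> simp [hx, ENNReal.ofReal_le_ofReal (hH x _),
          ENNReal.ofReal_le_ofReal (hH0 x)]
    refine ((lintegral_mono hb).trans_lt ?_).ne
    rw [lintegral_const, measure_univ, mul_one]
    exact hBound_ne.lt_top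
  have hPapAbs := hPap (fun x ξ => ENNReal.ofReal |h x ξ|)
    (fun x => (hmeas x).abs.ennreal_ofReal)
  have hfinR : (∫⁻ ξ, ∑' x, ENNReal.ofReal |v x ξ| ∂μ) ≠ ⊤ := by
    have : (∫⁻ ξ, ∑' x, ENNReal.ofReal |v x ξ| ∂μ)
        = ∫⁻ ξ, ∑' x, ENNReal.ofReal |u x ξ| ∂μ := by
      simp_rw [hrav, hrau]; exact hPapAbs.symm
    rw [this]; exact hfinL
  have habs_u : ∀ᵐ ξ ∂μ, Summable fun x => |u x ξ| := by
    refine Filter.Eventually.of_forall fun ξ => ?_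
    refine hHs.of_nonneg_of_le (fun x => abs_nonneg _) fun x => ?_
    by_cases hx : ξ x = true <;> simp [hu, hx, hH, hH0]
  have habs_v : ∀ᵐ ξ ∂μ, Summable fun x => |v x ξ| := by
    have hm : Measurable fun ξ => ∑' x, ENNReal.ofReal |v x ξ| :=
      Measurable.ennreal_tsum fun x => (hvmeas x).abs.ennreal_ofReal
    filter_upwards [ae_lt_top hm hfinR] with ξ hξ
    exact summable_of_tsum_ofReal_ne_top (fun x => abs_nonneg _) hξ.ne
  rw [integral_tsum_signed μ u humeas habs_u hfinL,
    integral_tsum_signed μ v hvmeas habs_v hfinR]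
  have e1 : (∫⁻ ξ, ∑' x, ENNReal.ofReal (u x ξ) ∂μ)
      = ∫⁻ ξ, ∑' x, ENNReal.ofReal (v x ξ) ∂μ := by
    simp_rw [hru, hrv]
    exact hPap (fun x ξ => ENNReal.ofReal (h x ξ)) (fun x => (hmeas x).ennreal_ofReal)
  have e2 : (∫⁻ ξ, ∑' x, ENNReal.ofReal (-(u x ξ)) ∂μ)
      = ∫⁻ ξ, ∑' x, ENNReal.ofReal (-(v x ξ)) ∂μ := by
    simp_rw [hrnu, hrnv]
    exact hPap (fun x ξ => ENNReal.ofReal (-(h x ξ))) (fun x => (hmeas x).neg.ennreal_ofReal)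
  rw [e1, e2]

/-- The Kawasaki pregenerator with jump rates `c`:
`L^K f(ξ) = Σ_{x∈ξ, y∉ξ} c(x,y;ξ)[f((ξ∖{x})∪{y}) − f(ξ)]`. -/
noncomputable def kawasakiGen {E : Type*} [DecidableEq E]
    (c : E → E → (E → Bool) → ℝ) (f : (E → Bool) → ℝ) (ξ : E → Bool) : ℝ :=
  ∑' p : E × E,
    (if ξ p.1 = true ∧ ξ p.2 = false then
      c p.1 p.2 ξ * (f (Function.update (Function.update ξ p.1 false) p.2 true) - f ξ)
     else 0)

private noncomputable def hhAux {E : Type*} [DecidableEq E]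
    (c : E → E → (E → Bool) → ℝ) (F G : (E → Bool) → ℝ) (x : E) (ξ : E → Bool) : ℝ :=
  ∑' y, (if ξ y = false ∧ y ≠ x then
    c x y (Function.update ξ x true) *
      (F (Function.update ξ x true) *
        (G (Function.update ξ y true) - G (Function.update ξ x true))) else 0)

set_option maxHeartbeats 2000000 in
/-- **Detailed balance implies symmetry of the Kawasaki pregenerator.**
Let `μ` be a probability measure on `X = {0,1}^E` with Papangelou intensity `α`
(Georgii–Nguyen–Zessin identity), and let `c` be measurable nonnegative jump rates,
vanishing unless `x ∈ ξ` and `y ∉ ξ`, with `c^K < ∞` and satisfying detailed balance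
`α(x;ξ) c(x,y;ξ∪{x}) = α(y;ξ) c(y,x;ξ∪{y})`.  Then for `f, g ∈ D(X)`,
`∫ f · L^K g dμ = ∫ L^K f · g dμ`. -/
theorem statement7 {E : Type*} [Countable E] [DecidableEq E]
    (μ : Measure (E → Bool)) [IsProbabilityMeasure μ]
    (α : E → (E → Bool) → ℝ)
    (hα0 : ∀ x ξ, 0 ≤ α x ξ) (hαmeas : ∀ x, Measurable (α x))
    (hPap : ∀ h : E → (E → Bool) → ℝ≥0∞, (∀ x, Measurable (h x)) →
      (∫⁻ ξ, ∑' x : E,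
          (if ξ x = true then h x (Function.update ξ x false) else 0) ∂μ) =
      ∫⁻ ξ, ∑' x : E,
          (if ξ x = false then ENNReal.ofReal (α x ξ) * h x ξ else 0) ∂μ)
    (c : E → E → (E → Bool) → ℝ)
    (hc0 : ∀ x y ξ, 0 ≤ c x y ξ)
    (hcmeas : ∀ x y, Measurable (c x y))
    (hcsupp : ∀ x y ξ, ¬(ξ x = true ∧ ξ y = false) → c x y ξ = 0)
    -- the condition `c^K < ∞`:
    (hcK : ∃ m : E → E → ℝ,
      (∀ x y (ξ : E → Bool), ξ x = false → ξ y = false →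
        c x y (Function.update ξ x true) ≤ m x y ∧
        c y x (Function.update ξ y true) ≤ m x y) ∧
      (∀ x, Summable (m x)) ∧ ∃ M : ℝ, ∀ x, (∑' y : E, m x y) ≤ M)
    (hdb : ∀ x y (ξ : E → Bool), x ≠ y → ξ x = false → ξ y = false →
      α x ξ * c x y (Function.update ξ x true) = α y ξ * c y x (Function.update ξ y true))
    (f g : (E → Bool) → ℝ) (hf : Continuous f) (hg : Continuous g)
    (hfD : Summable fun x : E => ⨆ ξ : E → Bool, |f (Function.update ξ x true) - f ξ|)
    (hgD : Summable fun x : E => ⨆ ξ : E → Bool, |g (Function.update ξ x true) - g ξ|) :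
    (∫ ξ, f ξ * kawasakiGen c g ξ ∂μ) = ∫ ξ, kawasakiGen c f ξ * g ξ ∂μ := by
  classical
  obtain ⟨m, hm, hmsum, M, hM⟩ := hcK
  set m' : E → E → ℝ := fun x y => min (m x y) (m y x) with hm'def
  have hm'0 : ∀ x y, 0 ≤ m' x y := by
    intro x y
    have h1 := (hm x y (fun _ => false) rfl rfl).1
    have h2 := (hm y x (fun _ => false) rfl rfl).1
    exact le_min ((hc0 _ _ _).trans h1) ((hc0 _ _ _).trans h2)
  have hm'symm : ∀ x y, m' x y = m' y x := fun x y => min_comm _ _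
  have hm'sum : ∀ x, Summable (m' x) := fun x =>
    (hmsum x).of_nonneg_of_le (hm'0 x) (fun y => min_le_left _ _)
  set M' := max M 0 with hM'def
  have hm'le : ∀ x, (∑' y, m' x y) ≤ M' := fun x =>
    le_trans (le_trans (Summable.tsum_le_tsum (fun y => min_le_left _ _) (hm'sum x) (hmsum x)) (hM x))
      (le_max_left _ _)
  have hcb : ∀ x y (ξ : E → Bool), y ≠ x → ξ y = false →
      c x y (Function.update ξ x true) ≤ m' x y := by
    intro x y ξ hyx hy
    have hx' : (Function.update ξ x false) x = false := Function.update_self x false ξ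
    have hy' : (Function.update ξ x false) y = false := by
      rw [Function.update_of_ne hyx]; exact hy
    have e : Function.update (Function.update ξ x false) x true = Function.update ξ x true :=
      Function.update_idem _ _ _
    refine le_min ?_ ?_
    · have := (hm x y _ hx' hy').1; rwa [e] at this
    · have := (hm y x _ hy' hx').2; rwa [e] at this
  -- sup bounds for f and g
  obtain ⟨ξf, -, hξf⟩ := isCompact_univ.exists_isMaxOn Set.univ_nonempty
    ((continuous_abs.comp hf).continuousOn)
  obtain ⟨ξg, -, hξg⟩ := isCompact_univ.exists_isMaxOn Set.univ_nonempty
    ((continuous_abs.comp hg).continuousOn)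
  set C0 : ℝ := |f ξf| + |g ξg| with hC0def
  have hC00 : (0:ℝ) ≤ C0 := add_nonneg (abs_nonneg _) (abs_nonneg _)
  have hfok : ∀ ξ, |f ξ| ≤ C0 := fun ξ =>
    le_trans (hξf (Set.mem_univ ξ)) (le_add_of_nonneg_right (abs_nonneg _))
  have hgok : ∀ ξ, |g ξ| ≤ C0 := fun ξ =>
    le_trans (hξg (Set.mem_univ ξ)) (le_add_of_nonneg_left (abs_nonneg _))
  -- the Δ's
  set Δf : E → ℝ := fun x : E => ⨆ ξ : E → Bool, |f (Function.update ξ x true) - f ξ| with hΔfdef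
  set Δg : E → ℝ := fun x : E => ⨆ ξ : E → Bool, |g (Function.update ξ x true) - g ξ| with hΔgdef
  have hbddf : ∀ x, BddAbove (Set.range fun ξ : E → Bool => |f (Function.update ξ x true) - f ξ|) := by
    intro x
    refine ⟨C0 + C0, ?_⟩
    rintro r ⟨ξ, rfl⟩
    exact le_trans (abs_sub _ _) (add_le_add (hfok _) (hfok _))
  have hbddg : ∀ x, BddAbove (Set.range fun ξ : E → Bool => |g (Function.update ξ x true) - g ξ|) := by
    intro x
    refine ⟨C0 + C0, ?_⟩
    rintro r ⟨ξ, rfl⟩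
    exact le_trans (abs_sub _ _) (add_le_add (hgok _) (hgok _))
  have hΔfle : ∀ x (ξ : E → Bool), |f (Function.update ξ x true) - f ξ| ≤ Δf x := fun x ξ =>
    le_ciSup (hbddf x) ξ
  have hΔgle : ∀ x (ξ : E → Bool), |g (Function.update ξ x true) - g ξ| ≤ Δg x := fun x ξ =>
    le_ciSup (hbddg x) ξ
  have hΔf0 : ∀ x, 0 ≤ Δf x := fun x => (abs_nonneg _).trans (hΔfle x (fun _ => false))
  have hΔg0 : ∀ x, 0 ≤ Δg x := fun x => (abs_nonneg _).trans (hΔgle x (fun _ => false))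
  set D : E → ℝ := fun x => Δf x + Δg x with hDdef
  have hD0 : ∀ x, 0 ≤ D x := fun x => add_nonneg (hΔf0 x) (hΔg0 x)
  have hDsum : Summable D := hfD.add hgD
  have hfdiff : ∀ x (ξ : E → Bool), |f (Function.update ξ x true) - f ξ| ≤ D x := fun x ξ =>
    le_trans (hΔfle x ξ) (le_add_of_nonneg_right (hΔg0 x))
  have hgdiff : ∀ x (ξ : E → Bool), |g (Function.update ξ x true) - g ξ| ≤ D x := fun x ξ =>
    le_trans (hΔgle x ξ) (le_add_of_nonneg_left (hΔf0 x))
  -- the dominating kernel B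
  set B : E → E → ℝ := fun x y => m' x y * (C0 * (D x + D y)) with hBdef
  have hB0 : ∀ x y, 0 ≤ B x y := fun x y =>
    mul_nonneg (hm'0 x y) (mul_nonneg hC00 (add_nonneg (hD0 x) (hD0 y)))
  have hsum1 : Summable (fun p : E × E => m' p.1 p.2 * D p.1) := by
    refine (summable_prod_of_nonneg (fun p => mul_nonneg (hm'0 _ _) (hD0 _))).2
      ⟨fun x => (hm'sum x).mul_right (D x), ?_⟩
    refine Summable.of_nonneg_of_le
      (fun x => tsum_nonneg fun y => mul_nonneg (hm'0 _ _) (hD0 _)) (fun x => ?_)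
      (hDsum.mul_left M')
    dsimp only
    rw [tsum_mul_right]
    exact mul_le_mul_of_nonneg_right (hm'le x) (hD0 x)
  have hsum2 : Summable (fun p : E × E => m' p.1 p.2 * D p.2) := by
    refine ((Equiv.prodComm E E).summable_iff
      (f := fun p : E × E => m' p.1 p.2 * D p.2)).1 ?_
    exact hsum1.congr fun p => by rw [hm'symm p.1 p.2]; rfl
  have hBsum : Summable (fun p : E × E => B p.1 p.2) := by
    refine Summable.congr ((hsum1.mul_left C0).add (hsum2.mul_left C0)) (fun p => ?_)
    simp only [hBdef]; ring
  set H : E → ℝ := fun x => ∑' y, B x y with hHdef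
  have hBx : ∀ x, Summable (fun y => B x y) := fun x => hBsum.prod_factor x
  have hHsum : Summable H := summable_fiber_sums hBsum
  have hH0 : ∀ x, 0 ≤ H x := fun x => tsum_nonneg (fun y => hB0 x y)
  -- termwise bound
  have hterm : ∀ (F G : (E → Bool) → ℝ), (∀ ξ, |F ξ| ≤ C0) →
      (∀ x (ξ : E → Bool), |G (Function.update ξ x true) - G ξ| ≤ D x) →
      ∀ x (ξ : E → Bool) y,
        |(if ξ y = false ∧ y ≠ x then
            c x y (Function.update ξ x true) *
              (F (Function.update ξ x true) *
                (G (Function.update ξ y true) - G (Function.update ξ x true))) else 0)|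
          ≤ B x y := by
    intro F G hFok hGok x ξ y
    by_cases hcond : ξ y = false ∧ y ≠ x
    · obtain ⟨hy, hyx⟩ := hcond
      rw [if_pos ⟨hy, hyx⟩]
      have hc1 : c x y (Function.update ξ x true) ≤ m' x y := hcb x y ξ hyx hy
      have hgd : |G (Function.update ξ y true) - G (Function.update ξ x true)| ≤ D x + D y := by
        calc |G (Function.update ξ y true) - G (Function.update ξ x true)|
            ≤ |G (Function.update ξ y true) - G ξ| + |G ξ - G (Function.update ξ x true)| :=
              abs_sub_le _ _ _
          _ ≤ D y + D x := add_le_add (hGok y ξ) (by rw [abs_sub_comm]; exact hGok x ξ)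
          _ = D x + D y := add_comm _ _
      simp only [hBdef]
      rw [abs_mul, abs_of_nonneg (hc0 _ _ _), abs_mul]
      exact mul_le_mul hc1 (mul_le_mul (hFok _) hgd (abs_nonneg _) hC00)
        (mul_nonneg (abs_nonneg _) (abs_nonneg _)) (hm'0 x y)
    · rw [if_neg hcond]; simpa using hB0 x y
  -- bound on hhAux
  have hhb : ∀ (F G : (E → Bool) → ℝ), (∀ ξ, |F ξ| ≤ C0) →
      (∀ x (ξ : E → Bool), |G (Function.update ξ x true) - G ξ| ≤ D x) →
      ∀ x (ξ : E → Bool), |hhAux c F G x ξ| ≤ H x := by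
    intro F G hFok hGok x ξ
    simp only [hHdef, hhAux]
    exact abs_tsum_le_of_abs_le (hterm F G hFok hGok x ξ) (hBx x)
  -- measurability of hhAux
  have hsetF : ∀ x : E, MeasurableSet {ξ : E → Bool | ξ x = false} := fun x => by
    have : {ξ : E → Bool | ξ x = false} = (fun ξ : E → Bool => ξ x) ⁻¹' {false} := rfl
    rw [this]; exact measurable_pi_apply x (measurableSet_singleton false)
  have hhm : ∀ (F G : (E → Bool) → ℝ), Measurable F → Measurable G →
      (∀ ξ, |F ξ| ≤ C0) →
      (∀ x (ξ : E → Bool), |G (Function.update ξ x true) - G ξ| ≤ D x) →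
      ∀ x, Measurable (hhAux c F G x) := by
    intro F G hFm hGm hFok hGok x
    have hrepr : hhAux c F G x = fun ξ => ∑' y, (if ξ y = false ∧ y ≠ x then
        c x y (Function.update ξ x true) *
          (F (Function.update ξ x true) *
            (G (Function.update ξ y true) - G (Function.update ξ x true))) else 0) := rfl
    rw [hrepr]
    refine measurable_tsum_real _ (fun y => ?_) (B x)
      (fun y ξ => hterm F G hFok hGok x ξ y) (hBx x)
    have hset : MeasurableSet {ξ : E → Bool | ξ y = false ∧ y ≠ x} := by
      rcases eq_or_ne y x with rfl | hyx
      · have : {ξ : E → Bool | ξ y = false ∧ y ≠ y} = ∅ := by ext ξ; simp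
        rw [this]; exact MeasurableSet.empty
      · have : {ξ : E → Bool | ξ y = false ∧ y ≠ x} = {ξ : E → Bool | ξ y = false} := by
          ext ξ; simp [hyx]
        rw [this]; exact hsetF y
    exact Measurable.ite hset
      (((hcmeas x y).comp measurable_update_left).mul
        ((hFm.comp measurable_update_left).mul
          ((hGm.comp measurable_update_left).sub (hGm.comp measurable_update_left))))
      measurable_const
  -- the key pointwise identity
  have key : ∀ (F G : (E → Bool) → ℝ), (∀ ξ, |F ξ| ≤ C0) →
      (∀ x (ξ : E → Bool), |G (Function.update ξ x true) - G ξ| ≤ D x) →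
      ∀ ξ : E → Bool, F ξ * kawasakiGen c G ξ
        = ∑' x, (if ξ x = true then hhAux c F G x (Function.update ξ x false) else 0) := by
    intro F G hFok hGok ξ
    have hKb : ∀ p : E × E,
        |F ξ * (if ξ p.1 = true ∧ ξ p.2 = false then
          c p.1 p.2 ξ * (G (Function.update (Function.update ξ p.1 false) p.2 true) - G ξ)
          else 0)| ≤ B p.1 p.2 := by
      rintro ⟨x, y⟩
      dsimp only
      by_cases hcond : ξ x = true ∧ ξ y = false
      · obtain ⟨hx, hy⟩ := hcond
        rw [if_pos ⟨hx, hy⟩]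
        have hyx : y ≠ x := fun e => by rw [e, hx] at hy; cases hy
        have hxi : Function.update ξ x true = ξ := by
          funext z
          rcases eq_or_ne z x with rfl | hz
          · rw [Function.update_self, hx]
          · rw [Function.update_of_ne hz]
        have hc1 : c x y ξ ≤ m' x y := by
          have := hcb x y ξ hyx hy; rwa [hxi] at this
        have hgd : |G (Function.update (Function.update ξ x false) y true) - G ξ| ≤ D x + D y := by
          have e2 : Function.update (Function.update ξ x false) x true = ξ := by
            rw [Function.update_idem]; exact hxi
          calc |G (Function.update (Function.update ξ x false) y true) - G ξ|
              ≤ |G (Function.update (Function.update ξ x false) y true)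
                    - G (Function.update ξ x false)|
                + |G (Function.update ξ x false) - G ξ| := abs_sub_le _ _ _
            _ ≤ D y + D x := by
                refine add_le_add (hGok y _) ?_
                rw [abs_sub_comm, show G ξ = G (Function.update (Function.update ξ x false) x true)
                  from by rw [e2]]
                exact hGok x _
            _ = D x + D y := add_comm _ _
        simp only [hBdef]
        rw [abs_mul, abs_mul, abs_of_nonneg (hc0 _ _ _)]
        calc |F ξ| * (c x y ξ *
              |G (Function.update (Function.update ξ x false) y true) - G ξ|)
            ≤ C0 * (m' x y * (D x + D y)) :=
              mul_le_mul (hFok ξ) (mul_le_mul hc1 hgd (abs_nonneg _) (hm'0 x y))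
                (mul_nonneg (hc0 _ _ _) (abs_nonneg _)) hC00
          _ = m' x y * (C0 * (D x + D y)) := by ring
      · rw [if_neg hcond]; simpa using hB0 x y
    have hKsum : Summable (fun p : E × E =>
        F ξ * (if ξ p.1 = true ∧ ξ p.2 = false then
          c p.1 p.2 ξ * (G (Function.update (Function.update ξ p.1 false) p.2 true) - G ξ)
          else 0)) := Summable.of_abs (hBsum.of_nonneg_of_le (fun p => abs_nonneg _) hKb)
    rw [kawasakiGen, ← tsum_mul_left, Summable.tsum_prod' hKsum (fun x => hKsum.prod_factor x)]
    refine tsum_congr fun x => ?_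
    by_cases hx : ξ x = true
    · rw [if_pos hx]
      have hxi : Function.update ξ x true = ξ := by
        funext z
        rcases eq_or_ne z x with rfl | hz
        · rw [Function.update_self, hx]
        · rw [Function.update_of_ne hz]
      have e2 : Function.update (Function.update ξ x false) x true = ξ := by
        rw [Function.update_idem]; exact hxi
      show _ = hhAux c F G x (Function.update ξ x false)
      rw [show hhAux c F G x (Function.update ξ x false) = ∑' y,
        (if (Function.update ξ x false) y = false ∧ y ≠ x then
          c x y (Function.update (Function.update ξ x false) x true) *
            (F (Function.update (Function.update ξ x false) x true) *
              (G (Function.update (Function.update ξ x false) y true)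
                - G (Function.update (Function.update ξ x false) x true))) else 0) from rfl]
      refine tsum_congr fun y => ?_
      dsimp only
      rcases eq_or_ne y x with rfl | hyx
      · simp [hx]
      · have hηy : (Function.update ξ x false) y = ξ y := Function.update_of_ne hyx false ξ
        by_cases hy : ξ y = false
        · rw [if_pos ⟨hx, hy⟩, if_pos ⟨by rw [hηy]; exact hy, hyx⟩, e2]
          ring
        · rw [if_neg (by tauto), if_neg (by rw [hηy]; tauto), mul_zero]
    · rw [if_neg hx]
      have hz : ∀ y : E, F ξ * (if ξ x = true ∧ ξ y = false then
          c x y ξ * (G (Function.update (Function.update ξ x false) y true) - G ξ) else 0)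
          = 0 := fun y => by rw [if_neg (fun h => hx h.1), mul_zero]
      exact (tsum_congr hz).trans tsum_zero
  -- GNZ on both sides
  have A1 := gnz_signed μ α hα0 hαmeas hPap (hhAux c f g)
    (hhm f g hf.measurable hg.measurable hfok hgdiff) H (hhb f g hfok hgdiff) hHsum
  have A2 := gnz_signed μ α hα0 hαmeas hPap (hhAux c g f)
    (hhm g f hg.measurable hf.measurable hgok hfdiff) H (hhb g f hgok hfdiff) hHsum
  have L1 : ∫ ξ, f ξ * kawasakiGen c g ξ ∂μ
      = ∫ ξ, (∑' x, if ξ x = true then hhAux c f g x (Function.update ξ x false) else 0) ∂μ :=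
    integral_congr_ae (Filter.Eventually.of_forall fun ξ => key f g hfok hgdiff ξ)
  have L2 : ∫ ξ, kawasakiGen c f ξ * g ξ ∂μ
      = ∫ ξ, (∑' x, if ξ x = true then hhAux c g f x (Function.update ξ x false) else 0) ∂μ :=
    integral_congr_ae (Filter.Eventually.of_forall fun ξ =>
      (mul_comm (kawasakiGen c f ξ) (g ξ)).trans (key g f hgok hfdiff ξ))
  -- the middle exchange, via detailed balance
  have hWm : Measurable fun ξ : E → Bool =>
      ∑' x, (if ξ x = false then ENNReal.ofReal (α x ξ) * ENNReal.ofReal (H x) else 0) :=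
    Measurable.ennreal_tsum fun x => Measurable.ite (hsetF x)
      ((hαmeas x).ennreal_ofReal.mul measurable_const) measurable_const
  have hWfin : (∫⁻ ξ, ∑' x,
      (if ξ x = false then ENNReal.ofReal (α x ξ) * ENNReal.ofReal (H x) else 0) ∂μ) ≠ ⊤ := by
    rw [← hPap (fun x _ => ENNReal.ofReal (H x)) (fun x => measurable_const)]
    refine ((lintegral_mono (g := fun _ => ∑' x : E, ENNReal.ofReal (H x))
      fun ξ => ENNReal.tsum_le_tsum fun x => ?_).trans_lt ?_).ne
    · by_cases hx : ξ x = true <;> simp [hx]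
    · rw [lintegral_const, measure_univ, mul_one,
        ← ENNReal.ofReal_tsum_of_nonneg hH0 hHsum]
      exact ENNReal.ofReal_lt_top
  have MID : ∫ ξ, (∑' x, if ξ x = false then α x ξ * hhAux c f g x ξ else 0) ∂μ
      = ∫ ξ, (∑' x, if ξ x = false then α x ξ * hhAux c g f x ξ else 0) ∂μ := by
    refine integral_congr_ae ?_
    filter_upwards [ae_lt_top hWm hWfin] with ξ hWξ
    -- summability of the α·H family
    have hsummαH : Summable (fun x => if ξ x = false then α x ξ * H x else 0) := by
      refine summable_of_tsum_ofReal_ne_top (fun x => ?_) ?_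
      · split_ifs with h
        · exact mul_nonneg (hα0 x ξ) (hH0 x)
        · exact le_rfl
      · have hrw : ∀ x, ENNReal.ofReal (if ξ x = false then α x ξ * H x else 0)
            = (if ξ x = false then ENNReal.ofReal (α x ξ) * ENNReal.ofReal (H x) else 0) := by
          intro x
          split_ifs with h
          · exact ENNReal.ofReal_mul (hα0 x ξ)
          · exact ENNReal.ofReal_zero
        rw [tsum_congr hrw]
        exact hWξ.ne
    -- dominating product family
    set W' : E × E → ℝ := fun p => if ξ p.1 = false then α p.1 ξ * B p.1 p.2 else 0 with hW'def
    have hW'0 : ∀ p, 0 ≤ W' p := by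
      rintro ⟨x, y⟩
      simp only [hW'def]
      split_ifs with hx
      · exact mul_nonneg (hα0 x ξ) (hB0 x y)
      · exact le_rfl
    have hW'sum : Summable W' := by
      refine (summable_prod_of_nonneg (fun p => hW'0 p)).2 ⟨fun x => ?_, ?_⟩
      · by_cases hx : ξ x = false
        · refine ((hBx x).mul_left (α x ξ)).congr fun y => ?_
          simp only [hW'def]; rw [if_pos hx]
        · refine summable_zero.congr fun y => ?_
          simp only [hW'def]; rw [if_neg hx]
      · refine hsummαH.congr fun x => ?_
        by_cases hx : ξ x = false
        · have h1 : (∑' y, W' (x, y)) = ∑' y, α x ξ * B x y := by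
            refine tsum_congr fun y => ?_
            simp only [hW'def]; rw [if_pos hx]
          rw [if_pos hx, h1, tsum_mul_left, hHdef]
        · have h1 : (∑' y, W' (x, y)) = ∑' _ : E, (0:ℝ) := by
            refine tsum_congr fun y => ?_
            simp only [hW'def]; rw [if_neg hx]
          rw [if_neg hx, h1, tsum_zero]
    -- the two product families
    set t1 : E × E → ℝ := fun p => if ξ p.1 = false ∧ ξ p.2 = false ∧ p.2 ≠ p.1 then
        α p.1 ξ * (c p.1 p.2 (Function.update ξ p.1 true) *
          (f (Function.update ξ p.1 true) *
            (g (Function.update ξ p.2 true) - g (Function.update ξ p.1 true)))) else 0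
      with ht1def
    set t2 : E × E → ℝ := fun p => if ξ p.1 = false ∧ ξ p.2 = false ∧ p.2 ≠ p.1 then
        α p.1 ξ * (c p.1 p.2 (Function.update ξ p.1 true) *
          (g (Function.update ξ p.1 true) *
            (f (Function.update ξ p.2 true) - f (Function.update ξ p.1 true)))) else 0
      with ht2def
    have ht1b : ∀ p, |t1 p| ≤ W' p := by
      rintro ⟨x, y⟩
      simp only [ht1def, hW'def]
      by_cases hcond : ξ x = false ∧ ξ y = false ∧ y ≠ x
      · obtain ⟨hx, hy, hyx⟩ := hcond
        rw [if_pos ⟨hx, hy, hyx⟩, if_pos hx, abs_mul, abs_of_nonneg (hα0 x ξ)]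
        refine mul_le_mul_of_nonneg_left ?_ (hα0 x ξ)
        have := hterm f g hfok hgdiff x ξ y
        rwa [if_pos ⟨hy, hyx⟩] at this
      · rw [if_neg hcond, abs_zero]
        split_ifs with hx
        · exact mul_nonneg (hα0 x ξ) (hB0 x y)
        · exact le_rfl
    have ht2b : ∀ p, |t2 p| ≤ W' p := by
      rintro ⟨x, y⟩
      simp only [ht2def, hW'def]
      by_cases hcond : ξ x = false ∧ ξ y = false ∧ y ≠ x
      · obtain ⟨hx, hy, hyx⟩ := hcond
        rw [if_pos ⟨hx, hy, hyx⟩, if_pos hx, abs_mul, abs_of_nonneg (hα0 x ξ)]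
        refine mul_le_mul_of_nonneg_left ?_ (hα0 x ξ)
        have := hterm g f hgok hfdiff x ξ y
        rwa [if_pos ⟨hy, hyx⟩] at this
      · rw [if_neg hcond, abs_zero]
        split_ifs with hx
        · exact mul_nonneg (hα0 x ξ) (hB0 x y)
        · exact le_rfl
    have ht1s : Summable t1 :=
      Summable.of_abs (hW'sum.of_nonneg_of_le (fun p => abs_nonneg _) ht1b)
    have ht2s : Summable t2 :=
      Summable.of_abs (hW'sum.of_nonneg_of_le (fun p => abs_nonneg _) ht2b)
    have step1 : (∑' x, if ξ x = false then α x ξ * hhAux c f g x ξ else 0) = ∑' p, t1 p := by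
      rw [Summable.tsum_prod' ht1s (fun x => ht1s.prod_factor x)]
      refine tsum_congr fun x => ?_
      by_cases hx : ξ x = false
      · rw [if_pos hx, show hhAux c f g x ξ = ∑' y, (if ξ y = false ∧ y ≠ x then
          c x y (Function.update ξ x true) *
            (f (Function.update ξ x true) *
              (g (Function.update ξ y true) - g (Function.update ξ x true))) else 0) from rfl,
          ← tsum_mul_left]
        refine tsum_congr fun y => ?_
        simp only [ht1def]
        by_cases hcond : ξ y = false ∧ y ≠ x
        · rw [if_pos hcond, if_pos ⟨hx, hcond.1, hcond.2⟩]
        · rw [if_neg hcond, if_neg (by tauto), mul_zero]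
      · rw [if_neg hx]
        have hz : ∀ y, t1 (x, y) = 0 := fun y => by
          simp only [ht1def]; rw [if_neg (by tauto)]
        exact ((tsum_congr hz).trans tsum_zero).symm
    have step2 : (∑' x, if ξ x = false then α x ξ * hhAux c g f x ξ else 0) = ∑' p, t2 p := by
      rw [Summable.tsum_prod' ht2s (fun x => ht2s.prod_factor x)]
      refine tsum_congr fun x => ?_
      by_cases hx : ξ x = false
      · rw [if_pos hx, show hhAux c g f x ξ = ∑' y, (if ξ y = false ∧ y ≠ x then
          c x y (Function.update ξ x true) *
            (g (Function.update ξ x true) *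
              (f (Function.update ξ y true) - f (Function.update ξ x true))) else 0) from rfl,
          ← tsum_mul_left]
        refine tsum_congr fun y => ?_
        simp only [ht2def]
        by_cases hcond : ξ y = false ∧ y ≠ x
        · rw [if_pos hcond, if_pos ⟨hx, hcond.1, hcond.2⟩]
        · rw [if_neg hcond, if_neg (by tauto), mul_zero]
      · rw [if_neg hx]
        have hz : ∀ y, t2 (x, y) = 0 := fun y => by
          simp only [ht2def]; rw [if_neg (by tauto)]
        exact ((tsum_congr hz).trans tsum_zero).symm
    -- antisymmetry via detailed balance
    set A : E × E → ℝ := fun p => if ξ p.1 = false ∧ ξ p.2 = false ∧ p.2 ≠ p.1 then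
        α p.1 ξ * c p.1 p.2 (Function.update ξ p.1 true) else 0 with hAdef
    have hAsymm : ∀ p : E × E, A (Prod.swap p) = A p := by
      rintro ⟨x, y⟩
      show A (y, x) = A (x, y)
      simp only [hAdef]
      rcases eq_or_ne y x with rfl | h3
      · simp
      · by_cases h1 : ξ x = false
        · by_cases h2 : ξ y = false
          · rw [if_pos ⟨h2, h1, (Ne.symm h3 : x ≠ y)⟩, if_pos ⟨h1, h2, h3⟩]
            exact (hdb x y ξ (Ne.symm h3) h1 h2).symm
          · rw [if_neg (by tauto), if_neg (by tauto)]
        · rw [if_neg (by tauto), if_neg (by tauto)]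
    have ht1A : ∀ p : E × E, t1 p = A p * (f (Function.update ξ p.1 true) *
        (g (Function.update ξ p.2 true) - g (Function.update ξ p.1 true))) := by
      rintro ⟨x, y⟩
      simp only [ht1def, hAdef]
      split_ifs with h
      · ring
      · rw [zero_mul]
    have ht2A : ∀ p : E × E, t2 p = A p * (g (Function.update ξ p.1 true) *
        (f (Function.update ξ p.2 true) - f (Function.update ξ p.1 true))) := by
      rintro ⟨x, y⟩
      simp only [ht2def, hAdef]
      split_ifs with h
      · ring
      · rw [zero_mul]
    have hwa : ∀ p : E × E, (t1 (Prod.swap p) - t2 (Prod.swap p)) = -(t1 p - t2 p) := by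
      rintro ⟨x, y⟩
      show t1 (y, x) - t2 (y, x) = -(t1 (x, y) - t2 (x, y))
      rw [ht1A (y, x), ht2A (y, x), ht1A (x, y), ht2A (x, y),
        show A (y, x) = A (x, y) from hAsymm (x, y)]
      dsimp only
      ring
    have hzero : (∑' p : E × E, (t1 p - t2 p)) = 0 := by
      have h1 : ∑' p : E × E, (t1 (Prod.swap p) - t2 (Prod.swap p))
          = ∑' p : E × E, (t1 p - t2 p) :=
        Equiv.tsum_eq (Equiv.prodComm E E) (fun p => t1 p - t2 p)
      rw [tsum_congr hwa, tsum_neg] at h1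
      linarith
    rw [step1, step2]
    have hsub := Summable.tsum_sub ht1s ht2s
    rw [hsub] at hzero
    linarith
  rw [L1, A1, MID, ← A2, ← L2]
end
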